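/- arXiv:1406.3702 — 6 statements merged into one kernel-verified Lean document; each statement's English description precedes it below -/
import Mathlib

section
/- Let N ≥ 2 and let q_1 < q_2 < ⋯ < q_N be real numbers. Then the N×N matrix E = (e^{−|q_i − q_j|})_{i,j=1}^N is invertible, and its inverse is the symmetric tridiagonal matrix with diagonal entries a_1 = (1/2)·e^{q_2−q_1}/sinh(q_2−q_1), a_n = (1/2)·sinh(q_{n+1}−q_{n−1})/(sinh(q_{n+1}−q_n)·sinh(q_n−q_{n−1})) for 2 ≤ n ≤ N−1, a_N = (1/2)·e^{q_N−q_{N−1}}/sinh(q_N−q_{N−1}), and off-diagonal entries b_n = −1/(2·sinh(q_{n+1}−q_n)) for n = 1,…,N−1 (in positions (n, n+1) and (n+1, n)), all other entries being zero. -/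
/-- The peakon interaction matrix `E i j = exp (-|q i - q j|)`. -/
noncomputable def peakonMatrix (N : ℕ) (q : ℕ → ℝ) : Matrix (Fin N) (Fin N) ℝ :=
  Matrix.of fun i j => Real.exp (-|q (i : ℕ) - q (j : ℕ)|)

/-- The symmetric tridiagonal matrix which inverts the peakon interaction matrix. -/
noncomputable def peakonInverse (N : ℕ) (q : ℕ → ℝ) : Matrix (Fin N) (Fin N) ℝ :=
  Matrix.of fun i j =>
    if (i : ℕ) = (j : ℕ) then
      (if (i : ℕ) = 0 then
        (1 / 2) * Real.exp (q 1 - q 0) / Real.sinh (q 1 - q 0)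
      else if (i : ℕ) = N - 1 then
        (1 / 2) * Real.exp (q (N - 1) - q (N - 2)) / Real.sinh (q (N - 1) - q (N - 2))
      else
        (1 / 2) * Real.sinh (q ((i : ℕ) + 1) - q ((i : ℕ) - 1)) /
          (Real.sinh (q ((i : ℕ) + 1) - q (i : ℕ)) *
            Real.sinh (q (i : ℕ) - q ((i : ℕ) - 1))))
    else if (j : ℕ) = (i : ℕ) + 1 then
      -(1 / (2 * Real.sinh (q (j : ℕ) - q (i : ℕ))))
    else if (i : ℕ) = (j : ℕ) + 1 then
      -(1 / (2 * Real.sinh (q (i : ℕ) - q (j : ℕ))))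
    else 0

/-
Column `j` of the tridiagonal matrix `T` has at most three nonzero entries, so the `(i, j)`
entry of `E * T` is a combination of `exp (-|x - q k|)`, `k ∈ {j - 1, j, j + 1}`, at `x = q i`.
On each side of `[q (j - 1), q (j + 1)]` every term is a multiple of the same `exp (± x)`, and
the entries of `T` are exactly the weights making these cancel; at `x = q j` the combination
is `1`. As `E` and `T` are square, `E * T = 1` also gives `T * E = 1`.
-/
open Real Finset

lemma sinh_sub_ne_zero {r s : ℝ} (h : r < s) : sinh (s - r) ≠ 0 :=
  (sinh_pos_iff.mpr (sub_pos.mpr h)).ne'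

theorem peakon_first_column_sum {x r s : ℝ} (hrs : r < s) (hx : x = r ∨ s ≤ x) :
    exp (-|x - r|) * ((1 / 2) * exp (s - r) / sinh (s - r)) +
      exp (-|x - s|) * -(1 / (2 * sinh (s - r))) = if x = r then 1 else 0 := by
  have := sinh_sub_ne_zero hrs
  rcases hx with rfl | hx <;> [
    rw [if_pos rfl, sub_self, abs_zero, neg_zero, exp_zero, abs_sub_comm,
      abs_of_pos (sub_pos.mpr hrs)];
    rw [if_neg (by linarith), abs_of_nonneg (by linarith), abs_of_nonneg (by linarith)]] <;>
  · field_simp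
    simp only [sinh_eq, neg_sub, exp_sub]
    field_simp
    ring

theorem peakon_last_column_sum {x r s : ℝ} (hrs : r < s) (hx : x ≤ r ∨ x = s) :
    exp (-|x - r|) * -(1 / (2 * sinh (s - r))) +
      exp (-|x - s|) * ((1 / 2) * exp (s - r) / sinh (s - r)) = if x = s then 1 else 0 := by
  have := sinh_sub_ne_zero hrs
  rcases hx with hx | rfl <;> [
    rw [if_neg (by linarith), abs_sub_comm, abs_of_nonneg (by linarith), abs_sub_comm,
      abs_of_nonneg (by linarith)];
    rw [if_pos rfl, sub_self, abs_zero, neg_zero, exp_zero, abs_of_pos (sub_pos.mpr hrs)]] <;>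
  · field_simp
    simp only [sinh_eq, neg_sub, exp_sub]
    field_simp
    ring

theorem peakon_middle_column_sum {x r s t : ℝ} (hrs : r < s) (hst : s < t)
    (hx : x ≤ r ∨ x = s ∨ t ≤ x) :
    exp (-|x - r|) * -(1 / (2 * sinh (s - r))) +
      exp (-|x - s|) * ((1 / 2) * sinh (t - r) / (sinh (t - s) * sinh (s - r))) +
      exp (-|x - t|) * -(1 / (2 * sinh (t - s))) = if x = s then 1 else 0 := by
  have := sinh_sub_ne_zero hrs
  have := sinh_sub_ne_zero hst
  rcases hx with hx | rfl | hx <;> [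
    rw [if_neg (by linarith), abs_sub_comm, abs_of_nonneg (by linarith), abs_sub_comm,
      abs_of_nonneg (by linarith), abs_sub_comm, abs_of_nonneg (by linarith)];
    rw [if_pos rfl, sub_self, abs_zero, neg_zero, exp_zero, abs_of_pos (sub_pos.mpr hrs),
      abs_sub_comm, abs_of_pos (sub_pos.mpr hst)];
    rw [if_neg (by linarith), abs_of_nonneg (by linarith), abs_of_nonneg (by linarith),
      abs_of_nonneg (by linarith)]] <;>
  · field_simp
    simp only [sinh_eq, neg_sub, exp_sub]
    field_simp
    ring

section

variable {N : ℕ} {q : ℕ → ℝ}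

theorem peakonInverse_apply_eq_zero {k j : Fin N} (h : (k : ℕ) + 1 < j ∨ (j : ℕ) + 1 < k) :
    peakonInverse N q k j = 0 := by
  simp only [peakonInverse, Matrix.of_apply]
  rw [if_neg (by omega), if_neg (by omega), if_neg (by omega)]

theorem peakonInverse_apply_of_eq_succ {k j : Fin N} (h : (j : ℕ) = k + 1) :
    peakonInverse N q k j = -(1 / (2 * sinh (q j - q k))) := by
  simp only [peakonInverse, Matrix.of_apply]
  rw [if_neg (by omega), if_pos h]

theorem peakonInverse_apply_of_succ_eq {k j : Fin N} (h : (k : ℕ) = j + 1) :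
    peakonInverse N q k j = -(1 / (2 * sinh (q k - q j))) := by
  simp only [peakonInverse, Matrix.of_apply]
  rw [if_neg (by omega), if_neg (by omega), if_pos h]

theorem peakonInverse_apply_first {j : Fin N} (hj : (j : ℕ) = 0) :
    peakonInverse N q j j = (1 / 2) * exp (q 1 - q 0) / sinh (q 1 - q 0) := by
  rw [peakonInverse, Matrix.of_apply, if_pos rfl, if_pos hj]

theorem peakonInverse_apply_last {j : Fin N} (hN : 2 ≤ N) (hj : (j : ℕ) = N - 1) :
    peakonInverse N q j j =
      (1 / 2) * exp (q (N - 1) - q (N - 2)) / sinh (q (N - 1) - q (N - 2)) := by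
  rw [peakonInverse, Matrix.of_apply, if_pos rfl, if_neg (by omega), if_pos hj]

theorem peakonInverse_apply_middle {j : Fin N} (h0 : (j : ℕ) ≠ 0) (hL : (j : ℕ) ≠ N - 1) :
    peakonInverse N q j j = (1 / 2) * sinh (q (j + 1) - q (j - 1)) /
      (sinh (q (j + 1) - q j) * sinh (q j - q (j - 1))) := by
  rw [peakonInverse, Matrix.of_apply, if_pos rfl, if_neg h0, if_neg hL]

theorem sum_mul_peakonInverse_eq_sum (v : Fin N → ℝ) (j : Fin N) (s : Finset (Fin N))
    (hs : ∀ k ∉ s, (k : ℕ) + 1 < j ∨ (j : ℕ) + 1 < k) :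
    ∑ k, v k * peakonInverse N q k j = ∑ k ∈ s, v k * peakonInverse N q k j :=
  (sum_subset (subset_univ s) fun k _ hk => by
    rw [peakonInverse_apply_eq_zero (hs k hk), mul_zero]).symm

theorem one_apply_eq_ite_of_strictMonoOn (hq : StrictMonoOn q (Set.Iio N)) (i j : Fin N) :
    (1 : Matrix (Fin N) (Fin N) ℝ) i j = if q i = q j then 1 else 0 := by
  simp only [Matrix.one_apply, hq.injOn.eq_iff i.isLt j.isLt, Fin.val_inj]

theorem peakonMatrix_mul_peakonInverse_apply_first (hN : 2 ≤ N)
    (hq : StrictMonoOn q (Set.Iio N)) (i j : Fin N) (hj : (j : ℕ) = 0) :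
    (peakonMatrix N q * peakonInverse N q) i j = (1 : Matrix (Fin N) (Fin N) ℝ) i j := by
  set j₁ : Fin N := ⟨1, by omega⟩
  rw [Matrix.mul_apply,
    sum_mul_peakonInverse_eq_sum _ j {j, j₁} (by simp [j₁, Fin.ext_iff]; omega),
    sum_pair (by simp [j₁, Fin.ext_iff]; omega), peakonInverse_apply_first hj,
    peakonInverse_apply_of_succ_eq (by simp [j₁, hj]), one_apply_eq_ite_of_strictMonoOn hq]
  simp only [peakonMatrix, Matrix.of_apply, j₁, hj]
  refine peakon_first_column_sum (hq (by simp; omega) (by simp; omega) zero_lt_one) ?_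
  rcases Nat.eq_zero_or_pos i with hi | hi
  · exact Or.inl (congrArg q hi)
  · exact Or.inr (hq.monotoneOn (by simp; omega) (by simp) hi)

theorem peakonMatrix_mul_peakonInverse_apply_last (hN : 2 ≤ N)
    (hq : StrictMonoOn q (Set.Iio N)) (i j : Fin N) (hj : (j : ℕ) = N - 1) :
    (peakonMatrix N q * peakonInverse N q) i j = (1 : Matrix (Fin N) (Fin N) ℝ) i j := by
  set j₀ : Fin N := ⟨N - 2, by omega⟩
  rw [Matrix.mul_apply,
    sum_mul_peakonInverse_eq_sum _ j {j₀, j} (by simp [j₀, Fin.ext_iff]; omega),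
    sum_pair (by simp [j₀, Fin.ext_iff]; omega), peakonInverse_apply_last hN hj,
    peakonInverse_apply_of_eq_succ (by simp [j₀]; omega), one_apply_eq_ite_of_strictMonoOn hq]
  simp only [peakonMatrix, Matrix.of_apply, j₀, hj]
  refine peakon_last_column_sum (hq (by simp; omega) (by simp; omega) (by omega)) ?_
  rcases Nat.lt_or_ge i (N - 1) with hi | hi
  · exact Or.inl (hq.monotoneOn (by simp) (by simp; omega) (by omega))
  · exact Or.inr (congrArg q (by omega))

theorem peakonMatrix_mul_peakonInverse_apply_middle (hq : StrictMonoOn q (Set.Iio N))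
    (i j : Fin N) (h0 : (j : ℕ) ≠ 0) (hL : (j : ℕ) ≠ N - 1) :
    (peakonMatrix N q * peakonInverse N q) i j = (1 : Matrix (Fin N) (Fin N) ℝ) i j := by
  set jm : Fin N := ⟨j - 1, by omega⟩
  set jp : Fin N := ⟨j + 1, by omega⟩
  rw [Matrix.mul_apply,
    sum_mul_peakonInverse_eq_sum _ j {jm, j, jp} (by simp [jm, jp, Fin.ext_iff]; omega),
    sum_insert (by simp [jm, jp, Fin.ext_iff]; omega), sum_pair (by simp [jp, Fin.ext_iff]),
    ← add_assoc, peakonInverse_apply_middle h0 hL,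
    peakonInverse_apply_of_eq_succ (by simp [jm]; omega),
    peakonInverse_apply_of_succ_eq (by simp [jp]), one_apply_eq_ite_of_strictMonoOn hq]
  simp only [peakonMatrix, Matrix.of_apply, jm, jp]
  refine peakon_middle_column_sum (hq (by simp; omega) (by simp) (by omega))
    (hq (by simp) (by simp; omega) (by omega)) ?_
  rcases lt_trichotomy (i : ℕ) j with hi | hi | hi
  · exact Or.inl (hq.monotoneOn (by simp) (by simp; omega) (by omega))
  · exact Or.inr (Or.inl (congrArg q hi))
  · exact Or.inr (Or.inr (hq.monotoneOn (by simp; omega) (by simp) (by omega)))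

theorem peakonMatrix_mul_peakonInverse (hN : 2 ≤ N) (hq : StrictMonoOn q (Set.Iio N)) :
    peakonMatrix N q * peakonInverse N q = 1 := by
  ext i j
  by_cases h0 : (j : ℕ) = 0
  · exact peakonMatrix_mul_peakonInverse_apply_first hN hq i j h0
  by_cases hL : (j : ℕ) = N - 1
  · exact peakonMatrix_mul_peakonInverse_apply_last hN hq i j hL
  exact peakonMatrix_mul_peakonInverse_apply_middle hq i j h0 hL

end

/-- for `N ≥ 2` and strictly increasing `q_0 < q_1 < ⋯ < q_{N-1}`, the matrix
`E = (e^{-|q i - q j|})` is invertible with inverse the symmetric tridiagonal matrix above. -/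
theorem stmt_0 (N : ℕ) (hN : 2 ≤ N) (q : ℕ → ℝ)
    (hq : ∀ i j, i < j → j < N → q i < q j) :
    peakonMatrix N q * peakonInverse N q = 1 ∧
    peakonInverse N q * peakonMatrix N q = 1 := by
  have hmul := peakonMatrix_mul_peakonInverse hN fun a _ b hb hab => hq a b hab hb
  exact ⟨hmul, mul_eq_one_comm.mp hmul⟩
end

section
/- Let z ∈ ℂ. If there exists a bounded solution at z of the generalized spectral problem that is not identically zero, then z is real. -/
/-!
Multiply the equation by `conj f` and integrate. On each gap between the points, `f` is
`A e^{t/2} + B e^{-t/2}` and the flux `conj f · f'` increases by `∫ |f'|² + |f|²/4`, a real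
number `≥ 0`; at `x_n` it jumps by `-(z ω_n + z² υ_n) |f(x_n)|²`; boundedness kills the growing
exponential on the two unbounded gaps, so the flux vanishes at `±∞`. Summing gives
`z S₁ + z² S₂ = E` with `S₁ = Σ ω_n |f(x_n)|²`, `S₂ = Σ υ_n |f(x_n)|² ≥ 0` and `E > 0` since
`f ≢ 0`. If `Im z ≠ 0`, the imaginary part forces `S₁ = -2 Re z · S₂`, and then the real part
reads `-|z|² S₂ = E > 0`, which is impossible.
-/

open scoped BigOperators

/-- Transfer matrix across an interval of length `d` for `-f'' + (1/4) f = 0`. -/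
noncomputable def Tmat (d : ℝ) : Matrix (Fin 2) (Fin 2) ℂ :=
  !![Complex.cosh ((d : ℂ) / 2), 2 * Complex.sinh ((d : ℂ) / 2);
     (1 / 2) * Complex.sinh ((d : ℂ) / 2), Complex.cosh ((d : ℂ) / 2)]

/-- Interface matrix at a point carrying weight `w` and dipole `v`. -/
noncomputable def Omat (w v : ℝ) (z : ℂ) : Matrix (Fin 2) (Fin 2) ℂ :=
  !![1, 0; -(z * (w : ℂ) + z ^ 2 * (v : ℂ)), 1]

/-- The value `(φ₋(z, x_N+), φ₋'(z, x_N+))` obtained by propagating the initial data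
`(e^{x_0/2}, (1/2) e^{x_0/2})` through all the point interactions (0-indexed data). -/
noncomputable def transVec (N : ℕ) (x w v : ℕ → ℝ) (z : ℂ) : Fin 2 → ℂ :=
  Matrix.mulVec
    ((((List.range (N - 1)).reverse.map
        (fun j => Omat (w (j + 1)) (v (j + 1)) z * Tmat (x (j + 1) - x j))).prod)
      * Omat (w 0) (v 0) z)
    ![Complex.exp ((x 0 : ℂ) / 2), (1 / 2) * Complex.exp ((x 0 : ℂ) / 2)]

/-- The Wronskian polynomial `W(z)` of the generalized spectral problem
`-f'' + (1/4) f = z ω f + z² υ f` (`W ≡ 1` when `N = 0`). -/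
noncomputable def Wron (N : ℕ) (x w v : ℕ → ℝ) (z : ℂ) : ℂ :=
  if N = 0 then 1
  else Complex.exp (-(x (N - 1) : ℂ) / 2) *
    (transVec N x w v z 1 + (1 / 2) * transVec N x w v z 0)

/-- The Weyl--Titchmarsh function `M(z)`. -/
noncomputable def WeylM (N : ℕ) (x w v : ℕ → ℝ) (z : ℂ) : ℂ :=
  Complex.exp ((x (N - 1) : ℂ) / 2) *
    ((1 / 2) * transVec N x w v z 0 - transVec N x w v z 1) / Wron N x w v z

/-- `f` (with distributional derivative represented by `f'`) is a solution at `z` of the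
generalized spectral problem `-f'' + (1/4) f = z ω f + z² υ f` with
`ω = Σ_{n<N} w n δ_{x n}`, `υ = Σ_{n<N} v n δ_{x n}`: it is continuous, twice differentiable
away from the points `x n` with `f'' = (1/4) f` there, and the one-sided limits of `f'` at
each `x n` exist and satisfy the jump condition
`f'(x_n+) - f'(x_n-) = -(z w_n + z² v_n) f (x_n)`. -/
def IsSol (N : ℕ) (x w v : ℕ → ℝ) (z : ℂ) (f f' : ℝ → ℂ) : Prop :=
  Continuous f ∧
  (∀ t : ℝ, (∀ n < N, t ≠ x n) →
    HasDerivAt f (f' t) t ∧ HasDerivAt f' ((1 / 4) * f t) t) ∧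
  (∀ n < N, ∃ L R : ℂ,
    Filter.Tendsto f' (nhdsWithin (x n) (Set.Iio (x n))) (nhds L) ∧
    Filter.Tendsto f' (nhdsWithin (x n) (Set.Ioi (x n))) (nhds R) ∧
    R - L = -(z * (w n : ℂ) + z ^ 2 * (v n : ℂ)) * f (x n))

open Filter Topology Finset ComplexConjugate

lemma im_eq_zero_of_mul_add_sq_mul_eq_pos (z : ℂ) {S₁ S₂ T : ℝ} (hS₂ : 0 ≤ S₂) (hT : 0 < T)
    (h : z * S₁ + z ^ 2 * S₂ = T) : z.im = 0 := by
  have hre := congrArg Complex.re h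
  have him := congrArg Complex.im h
  simp only [Complex.add_re, Complex.add_im, Complex.mul_re, Complex.mul_im, Complex.ofReal_re,
    Complex.ofReal_im, pow_two] at hre him
  by_contra hz
  have hS₁ : S₁ + 2 * z.re * S₂ = 0 :=
    (mul_eq_zero.mp (by linear_combination him : z.im * (S₁ + 2 * z.re * S₂) = 0)).resolve_left hz
  have hT' : T = -(z.re ^ 2 + z.im ^ 2) * S₂ := by linear_combination -hre + z.re * hS₁
  nlinarith [mul_nonneg (add_nonneg (sq_nonneg z.re) (sq_nonneg z.im)) hS₂]

noncomputable def expSol (a b : ℂ) (t : ℝ) : ℂ :=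
  a * (Real.exp (t / 2) : ℂ) + b * (Real.exp (-t / 2) : ℂ)

lemma ofReal_exp_half_mul_exp_neg_half (t : ℝ) :
    (Real.exp (t / 2) : ℂ) * Real.exp (-t / 2) = 1 := by
  rw [← Complex.ofReal_mul, ← Real.exp_add, show t / 2 + -t / 2 = 0 by ring, Real.exp_zero,
    Complex.ofReal_one]

lemma expSol_neg (a b : ℂ) (t : ℝ) : expSol a b (-t) = expSol b a t := by
  simp only [expSol, neg_neg]
  ring

lemma continuous_expSol (a b : ℂ) : Continuous (expSol a b) := by
  unfold expSol
  fun_prop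

lemma eq_of_hasDerivAt_zero {s : Set ℝ} (hs : s.OrdConnected) {g : ℝ → ℂ}
    (hg : ∀ t ∈ s, HasDerivAt g 0 t) {t₀ t : ℝ} (h₀ : t₀ ∈ s) (ht : t ∈ s) : g t = g t₀ := by
  have := hs.convex.norm_image_sub_le_of_norm_hasDerivWithin_le
    (fun u hu => (hg u hu).hasDerivWithinAt) (fun _ _ => norm_zero.le) h₀ ht
  simpa [sub_eq_zero] using this

lemma exists_eq_expSol_of_ordConnected {s : Set ℝ} (hs : s.OrdConnected) {f f' : ℝ → ℂ}
    (hf : ∀ t ∈ s, HasDerivAt f (f' t) t ∧ HasDerivAt f' (1 / 4 * f t) t) :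
    ∃ A B : ℂ, ∀ t ∈ s, f t = expSol A B t ∧ f' t = expSol (A / 2) (-B / 2) t := by
  rcases s.eq_empty_or_nonempty with rfl | ⟨t₀, h₀⟩
  · exact ⟨0, 0, fun t ht => ht.elim⟩
  -- `f' ± f / 2` solve `g' = ± g / 2`, so they are multiples of `exp (± t / 2)`
  set P : ℝ → ℂ := fun t => (f' t + f t / 2) * Real.exp (-t / 2)
  set Q : ℝ → ℂ := fun t => (f' t - f t / 2) * Real.exp (t / 2)
  have hP : ∀ t ∈ s, HasDerivAt P 0 t := fun t ht => by
    obtain ⟨h1, h2⟩ := hf t ht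
    refine ((h2.add (h1.div_const 2)).mul
      ((hasDerivAt_neg t).div_const 2).exp.ofReal_comp).congr_deriv ?_
    simp only [Pi.add_apply]; push_cast; ring
  have hQ : ∀ t ∈ s, HasDerivAt Q 0 t := fun t ht => by
    obtain ⟨h1, h2⟩ := hf t ht
    refine ((h2.sub (h1.div_const 2)).mul
      ((hasDerivAt_id t).div_const 2).exp.ofReal_comp).congr_deriv ?_
    simp only [Pi.sub_apply, id]; push_cast; ring
  refine ⟨P t₀, -Q t₀, fun t ht => ?_⟩
  rw [← eq_of_hasDerivAt_zero hs hP h₀ ht, ← eq_of_hasDerivAt_zero hs hQ h₀ ht]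
  have hE := ofReal_exp_half_mul_exp_neg_half t
  simp only [P, Q, expSol]
  constructor
  · linear_combination (-f t) * hE
  · linear_combination (-f' t) * hE

lemma eq_zero_of_bounded_expSol_atTop {g : ℝ → ℂ} {A B : ℂ} {C : ℝ} (hbd : ∀ t, ‖g t‖ ≤ C)
    (hg : ∀ᶠ t in atTop, g t = expSol A B t) : A = 0 := by
  by_contra hA
  have hgrow : Tendsto (fun t => ‖A‖ * Real.exp (t / 2)) atTop atTop :=
    (Real.tendsto_exp_atTop.comp (tendsto_id.atTop_div_const two_pos)).const_mul_atTop
      (norm_pos_iff.2 hA)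
  obtain ⟨t, ht, ht₀, hbig⟩ :=
    (hg.and ((eventually_ge_atTop 0).and (hgrow.eventually_gt_atTop (C + ‖B‖)))).exists
  have hdecay : Real.exp (-t / 2) ≤ 1 := Real.exp_le_one_iff.2 (by linarith)
  have := norm_le_add_norm_add ((A : ℂ) * Real.exp (t / 2)) (B * Real.exp (-t / 2))
  rw [← expSol, ← ht, norm_mul, norm_mul, Complex.norm_real, Complex.norm_real,
    Real.norm_of_nonneg (Real.exp_pos _).le, Real.norm_of_nonneg (Real.exp_pos _).le] at this
  nlinarith [hbd t, norm_nonneg B]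

lemma eq_zero_of_bounded_expSol_atBot {g : ℝ → ℂ} {A B : ℂ} {C : ℝ} (hbd : ∀ t, ‖g t‖ ≤ C)
    (hg : ∀ᶠ t in atBot, g t = expSol A B t) : B = 0 :=
  eq_zero_of_bounded_expSol_atTop (g := fun t => g (-t)) (B := A) (fun t => hbd (-t))
    (by filter_upwards [tendsto_neg_atTop_atBot.eventually hg] with t ht
        rw [ht, expSol_neg])

lemma sum_range_succ_sub_eq_sub_sub_sum (F G : ℕ → ℂ) (M : ℕ) :
    ∑ n ∈ range (M + 1), (G n - F n) = G M - F 0 - ∑ n ∈ range M, (F (n + 1) - G n) := by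
  rw [sum_sub_distrib, sum_sub_distrib, sum_range_succ G, sum_range_succ' F]
  ring

/-- The `n`-th component of `ℝ ∖ {x 0, …, x (N - 1)}`, between `x (n - 1)` and `x n`,
where `x (-1) = -∞` and `x N = +∞`. -/
def gap (N : ℕ) (x : ℕ → ℝ) (n : ℕ) : Set ℝ :=
  {t | (∀ m ∈ Set.Iio n, x m < t) ∧ ∀ m ∈ Set.Ico n N, t < x m}

section Gap

variable {N n : ℕ} {x : ℕ → ℝ}

lemma ordConnected_gap : (gap N x n).OrdConnected :=
  ⟨fun _ hs _ ht _ hu => ⟨fun m hm => (hs.1 m hm).trans_le hu.1,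
    fun m hm => hu.2.trans_lt (ht.2 m hm)⟩⟩

lemma ne_of_mem_gap {t : ℝ} (ht : t ∈ gap N x n) {m : ℕ} (hm : m < N) : t ≠ x m := by
  rcases lt_or_ge m n with h | h
  · exact (ht.1 m h).ne'
  · exact (ht.2 m ⟨h, hm⟩).ne

lemma gap_zero_mem_atBot : gap N x 0 ∈ atBot := by
  filter_upwards [(Set.finite_Ico 0 N).eventually_all.2 fun m _ => eventually_lt_atBot (x m)]
    with t ht
  exact ⟨fun m hm => absurd hm (Nat.not_lt_zero m), ht⟩

lemma gap_self_mem_atTop : gap N x N ∈ atTop := by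
  filter_upwards [(Set.finite_Iio N).eventually_all.2 fun m _ => eventually_gt_atTop (x m)]
    with t ht
  exact ⟨ht, fun m hm => absurd hm.2 (not_lt.2 hm.1)⟩

variable (hx : ∀ i j, i < j → j < N → x i < x j)
include hx

lemma points_le {i j : ℕ} (hij : i ≤ j) (hj : j < N) : x i ≤ x j :=
  hij.eq_or_lt.elim (fun h => h ▸ le_rfl) fun h => (hx i j h hj).le

lemma gap_mem_nhdsLT (hn : n < N) : gap N x n ∈ 𝓝[<] x n := by
  filter_upwards [nhdsWithin_le_nhds ((Set.finite_Iio n).eventually_all.2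
    fun m hm => eventually_gt_nhds (hx m n hm hn)), self_mem_nhdsWithin] with t hlt hgt
  exact ⟨hlt, fun m hm => hgt.out.trans_le (points_le hx hm.1 hm.2)⟩

lemma gap_succ_mem_nhdsGT (hn : n < N) : gap N x (n + 1) ∈ 𝓝[>] x n := by
  filter_upwards [nhdsWithin_le_nhds ((Set.finite_Ico (n + 1) N).eventually_all.2
    fun m hm => eventually_lt_nhds (hx n m hm.1 hm.2)), self_mem_nhdsWithin] with t hgt hlt
  exact ⟨fun m hm => (points_le hx (Nat.lt_succ_iff.1 hm) hn).trans_lt hlt, hgt⟩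

lemma mem_gap_or_eq_point (t : ℝ) : (∃ n ≤ N, t ∈ gap N x n) ∨ ∃ n < N, t = x n := by
  classical
  have hex : ∃ n, n = N ∨ t ≤ x n := ⟨N, Or.inl rfl⟩
  set n := Nat.find hex
  have hlt : ∀ m ∈ Set.Iio n, x m < t := fun m hm =>
    not_le.1 fun h => Nat.find_min hex hm (Or.inr h)
  have hnN : n ≤ N := Nat.find_min' hex (Or.inl rfl)
  by_cases hn : n = N
  · exact Or.inl ⟨n, hnN, hlt, fun m hm => absurd hm.2 (not_lt.2 (hn ▸ hm.1))⟩
  have htn : t ≤ x n := (Nat.find_spec hex).resolve_left hn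
  rcases htn.lt_or_eq with h | h
  · exact Or.inl ⟨n, hnN, hlt, fun m hm => h.trans_le (points_le hx hm.1 hm.2)⟩
  · exact Or.inr ⟨n, lt_of_le_of_ne hnN hn, h⟩

end Gap

def IsGapRepr (N : ℕ) (x : ℕ → ℝ) (f f' : ℝ → ℂ) (a b : ℕ → ℂ) : Prop :=
  ∀ n ≤ N, ∀ t ∈ gap N x n, f t = expSol (a n) (b n) t ∧ f' t = expSol (a n / 2) (-b n / 2) t

lemma IsSol.exists_isGapRepr {N : ℕ} {x w v : ℕ → ℝ} {z : ℂ} {f f' : ℝ → ℂ}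
    (hsol : IsSol N x w v z f f') : ∃ a b, IsGapRepr N x f f' a b := by
  choose a b hab using fun n => exists_eq_expSol_of_ordConnected (ordConnected_gap (n := n))
    fun t ht => hsol.2.1 t fun m hm => ne_of_mem_gap ht hm
  exact ⟨a, b, fun n _ => hab n⟩

/-- `conj f * f'` for `f = expSol a b`; its derivative `|f'|² + |f|² / 4` is real and
nonnegative. -/
noncomputable def flux (a b : ℂ) (s : ℝ) : ℂ :=
  conj (expSol a b s) * expSol (a / 2) (-b / 2) s

lemma flux_eq (a b : ℂ) (s : ℝ) :
    flux a b s
      = ((Complex.normSq a / 2 * Real.exp s - Complex.normSq b / 2 * Real.exp (-s) : ℝ) : ℂ)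
        + (conj b * a - conj a * b) / 2 := by
  have hs : Real.exp s = Real.exp (s / 2) * Real.exp (s / 2) := by rw [← Real.exp_add]; ring_nf
  have hs' : Real.exp (-s) = Real.exp (-s / 2) * Real.exp (-s / 2) := by
    rw [← Real.exp_add]; ring_nf
  rw [hs, hs']
  simp only [flux, expSol, map_add, map_mul, Complex.conj_ofReal, Complex.ofReal_sub,
    Complex.ofReal_mul, Complex.ofReal_div, Complex.normSq_eq_conj_mul_self, Complex.ofReal_ofNat]
  linear_combination ((conj b * a - conj a * b) / 2) * ofReal_exp_half_mul_exp_neg_half s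

/-- `∫ₛᵗ |f'|² + |f|² / 4` for `f = expSol a b`. -/
noncomputable def gapEnergy (a b : ℂ) (s t : ℝ) : ℝ :=
  Complex.normSq a / 2 * (Real.exp t - Real.exp s)
    + Complex.normSq b / 2 * (Real.exp (-s) - Real.exp (-t))

lemma flux_sub_flux (a b : ℂ) (s t : ℝ) : flux a b t - flux a b s = gapEnergy a b s t := by
  rw [flux_eq, flux_eq, gapEnergy]
  push_cast
  ring

lemma flux_zero_right (a : ℂ) (s : ℝ) :
    flux a 0 s = ((Complex.normSq a / 2 * Real.exp s : ℝ) : ℂ) := by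
  simp [flux_eq]

lemma flux_zero_left (b : ℂ) (s : ℝ) :
    flux 0 b s = -((Complex.normSq b / 2 * Real.exp (-s) : ℝ) : ℂ) := by
  simp [flux_eq]

lemma gapEnergy_nonneg (a b : ℂ) {s t : ℝ} (hst : s ≤ t) : 0 ≤ gapEnergy a b s t := by
  have := Real.exp_le_exp.2 hst
  have := Real.exp_le_exp.2 (neg_le_neg hst)
  unfold gapEnergy
  nlinarith [Complex.normSq_nonneg a, Complex.normSq_nonneg b]

lemma gapEnergy_pos {a b : ℂ} {s t : ℝ} (hst : s < t) (hab : a ≠ 0 ∨ b ≠ 0) :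
    0 < gapEnergy a b s t := by
  have := Real.exp_lt_exp.2 hst
  have := Real.exp_lt_exp.2 (neg_lt_neg hst)
  unfold gapEnergy
  rcases hab with h | h <;>
    nlinarith [Complex.normSq_pos.2 h, Complex.normSq_nonneg a, Complex.normSq_nonneg b]

/-- `∫ |f'|² + |f|² / 4` over `ℝ` for the solution with coefficients `a`, `b` on the gaps of
`x 0 < ⋯ < x M`, when `b 0 = 0` and `a (M + 1) = 0`. -/
noncomputable def totalEnergy (M : ℕ) (x : ℕ → ℝ) (a b : ℕ → ℂ) : ℝ :=
  Complex.normSq (a 0) / 2 * Real.exp (x 0)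
    + ∑ n ∈ range M, gapEnergy (a (n + 1)) (b (n + 1)) (x n) (x (n + 1))
    + Complex.normSq (b (M + 1)) / 2 * Real.exp (-x M)

lemma totalEnergy_pos {M : ℕ} {x : ℕ → ℝ} {a b : ℕ → ℂ}
    (hx : ∀ i j, i < j → j < M + 1 → x i < x j) (hb₀ : b 0 = 0) (ha : a (M + 1) = 0)
    (hab : ∃ n ≤ M + 1, a n ≠ 0 ∨ b n ≠ 0) : 0 < totalEnergy M x a b := by
  have hleft : 0 ≤ Complex.normSq (a 0) / 2 * Real.exp (x 0) := by
    have := Complex.normSq_nonneg (a 0); positivity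
  have hright : 0 ≤ Complex.normSq (b (M + 1)) / 2 * Real.exp (-x M) := by
    have := Complex.normSq_nonneg (b (M + 1)); positivity
  have hmid : ∀ n ∈ range M, 0 ≤ gapEnergy (a (n + 1)) (b (n + 1)) (x n) (x (n + 1)) :=
    fun n hn => gapEnergy_nonneg _ _ (hx n (n + 1) n.lt_succ_self (by simpa using hn)).le
  obtain ⟨n, hn, hne⟩ := hab
  unfold totalEnergy
  rcases n with _ | n
  · have := Complex.normSq_pos.2 (hne.resolve_right (not_not.2 hb₀))
    have := sum_nonneg hmid
    positivity
  rcases (Nat.succ_le_succ_iff.1 hn).lt_or_eq with hn | rfl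
  · have := sum_pos' hmid ⟨n, mem_range.2 hn,
      gapEnergy_pos (hx n (n + 1) n.lt_succ_self (by omega)) hne⟩
    linarith
  · have := Complex.normSq_pos.2 (hne.resolve_left (not_not.2 ha))
    have := sum_nonneg hmid
    positivity

namespace IsGapRepr

variable {N : ℕ} {x w v : ℕ → ℝ} {z : ℂ} {f f' : ℝ → ℂ} {a b : ℕ → ℂ}
  (h : IsGapRepr N x f f' a b) (hx : ∀ i j, i < j → j < N → x i < x j)
include h hx

lemma apply_eq_left (hf : Continuous f) {n : ℕ} (hn : n < N) :
    f (x n) = expSol (a n) (b n) (x n) :=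
  tendsto_nhds_unique_of_eventuallyEq ((hf.tendsto _).mono_left nhdsWithin_le_nhds)
    (((continuous_expSol _ _).tendsto _).mono_left nhdsWithin_le_nhds)
    (eventually_of_mem (gap_mem_nhdsLT hx hn) fun t ht => (h n hn.le t ht).1)

lemma apply_eq_right (hf : Continuous f) {n : ℕ} (hn : n < N) :
    f (x n) = expSol (a (n + 1)) (b (n + 1)) (x n) :=
  tendsto_nhds_unique_of_eventuallyEq ((hf.tendsto _).mono_left nhdsWithin_le_nhds)
    (((continuous_expSol _ _).tendsto _).mono_left nhdsWithin_le_nhds)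
    (eventually_of_mem (gap_succ_mem_nhdsGT hx hn) fun t ht => (h (n + 1) hn t ht).1)

lemma flux_succ_sub_flux (hsol : IsSol N x w v z f f') {n : ℕ} (hn : n < N) :
    flux (a (n + 1)) (b (n + 1)) (x n) - flux (a n) (b n) (x n)
      = -(z * w n + z ^ 2 * v n) * Complex.normSq (f (x n)) := by
  obtain ⟨L, R, hL, hR, hjump⟩ := hsol.2.2 n hn
  have hL' : L = expSol (a n / 2) (-b n / 2) (x n) :=
    tendsto_nhds_unique_of_eventuallyEq hL
      (((continuous_expSol _ _).tendsto _).mono_left nhdsWithin_le_nhds)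
      (eventually_of_mem (gap_mem_nhdsLT hx hn) fun t ht => (h n hn.le t ht).2)
  have hR' : R = expSol (a (n + 1) / 2) (-b (n + 1) / 2) (x n) :=
    tendsto_nhds_unique_of_eventuallyEq hR
      (((continuous_expSol _ _).tendsto _).mono_left nhdsWithin_le_nhds)
      (eventually_of_mem (gap_succ_mem_nhdsGT hx hn) fun t ht => (h (n + 1) hn t ht).2)
  rw [flux, flux, ← h.apply_eq_left hx hsol.1 hn, ← h.apply_eq_right hx hsol.1 hn, ← hL', ← hR',
    ← mul_sub, hjump, Complex.normSq_eq_conj_mul_self]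
  ring

lemma exists_coeff_ne_zero (hf : Continuous f) (hne : ∃ t, f t ≠ 0) :
    ∃ n ≤ N, a n ≠ 0 ∨ b n ≠ 0 := by
  obtain ⟨t, ht⟩ := hne
  by_contra! hzero
  rcases mem_gap_or_eq_point hx t with ⟨n, hn, htn⟩ | ⟨n, hn, rfl⟩
  · exact ht (by rw [(h n hn t htn).1, expSol, (hzero n hn).1, (hzero n hn).2]; ring)
  · exact ht (by
      rw [h.apply_eq_left hx hf hn, expSol, (hzero n hn.le).1, (hzero n hn.le).2]; ring)

end IsGapRepr

theorem IsGapRepr.energy_identity {M : ℕ} {x w v : ℕ → ℝ} {z : ℂ} {f f' : ℝ → ℂ}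
    {a b : ℕ → ℂ} (h : IsGapRepr (M + 1) x f f' a b)
    (hx : ∀ i j, i < j → j < M + 1 → x i < x j) (hsol : IsSol (M + 1) x w v z f f')
    (hb₀ : b 0 = 0) (ha : a (M + 1) = 0) :
    z * ((∑ n ∈ range (M + 1), w n * Complex.normSq (f (x n)) : ℝ) : ℂ)
      + z ^ 2 * ((∑ n ∈ range (M + 1), v n * Complex.normSq (f (x n)) : ℝ) : ℂ)
      = totalEnergy M x a b := by
  -- sum the jumps of `flux` at the points and telescope against its increments on the gaps
  have hjumps := sum_range_succ_sub_eq_sub_sub_sum (fun n => flux (a n) (b n) (x n))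
    (fun n => flux (a (n + 1)) (b (n + 1)) (x n)) M
  rw [sum_congr rfl fun n hn => h.flux_succ_sub_flux hx hsol (mem_range.1 hn), hb₀, ha,
    flux_zero_right, flux_zero_left,
    sum_congr rfl fun n _ => flux_sub_flux (a (n + 1)) (b (n + 1)) (x n) (x (n + 1))] at hjumps
  have hterm : ∀ n, -(z * w n + z ^ 2 * v n) * (Complex.normSq (f (x n)) : ℂ)
      = -(z * ((w n * Complex.normSq (f (x n)) : ℝ) : ℂ)
        + z ^ 2 * ((v n * Complex.normSq (f (x n)) : ℝ) : ℂ)) := fun n => by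
    push_cast; ring
  simp only [hterm, sum_neg_distrib] at hjumps
  simp only [totalEnergy, Complex.ofReal_add, Complex.ofReal_sum, mul_sum, ← sum_add_distrib]
  linear_combination -hjumps

theorem stmt_1_general (N : ℕ) (hN : 1 ≤ N) (x w v : ℕ → ℝ)
    (hx : ∀ i j, i < j → j < N → x i < x j)
    (hv : ∀ n, n < N → 0 ≤ v n)
    (z : ℂ) (f f' : ℝ → ℂ)
    (hsol : IsSol N x w v z f f')
    (hbd : ∃ C : ℝ, ∀ t : ℝ, ‖f t‖ ≤ C)
    (hne : ∃ t : ℝ, f t ≠ 0) :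
    z.im = 0 := by
  obtain ⟨M, rfl⟩ : ∃ M, N = M + 1 := ⟨N - 1, by omega⟩
  obtain ⟨C, hC⟩ := hbd
  obtain ⟨a, b, h⟩ := hsol.exists_isGapRepr
  have hb₀ : b 0 = 0 := eq_zero_of_bounded_expSol_atBot hC
    (eventually_of_mem gap_zero_mem_atBot fun t ht => (h 0 (Nat.zero_le _) t ht).1)
  have ha : a (M + 1) = 0 := eq_zero_of_bounded_expSol_atTop hC
    (eventually_of_mem gap_self_mem_atTop fun t ht => (h (M + 1) le_rfl t ht).1)
  refine im_eq_zero_of_mul_add_sq_mul_eq_pos z ?_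
    (totalEnergy_pos hx hb₀ ha (h.exists_coeff_ne_zero hx hsol.1 hne))
    (h.energy_identity hx hsol hb₀ ha)
  exact sum_nonneg fun n hn => mul_nonneg (hv n (mem_range.1 hn)) (Complex.normSq_nonneg _)

/-- if the generalized spectral problem has a nontrivial bounded solution
at `z`, then `z` is real. -/
theorem stmt_1 (N : ℕ) (hN : 1 ≤ N) (x w v : ℕ → ℝ)
    (hx : ∀ i j, i < j → j < N → x i < x j)
    (hv : ∀ n, n < N → 0 ≤ v n) (hnd : ∀ n, n < N → 0 < |w n| + v n)
    (z : ℂ) (f f' : ℝ → ℂ)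
    (hsol : IsSol N x w v z f f')
    (hbd : ∃ C : ℝ, ∀ t : ℝ, ‖f t‖ ≤ C)
    (hne : ∃ t : ℝ, f t ≠ 0) :
    z.im = 0 :=
  stmt_1_general N hN x w v hx hv z f f' hsol hbd hne
end

section
/- Let λ ∈ ℝ and let f be a bounded solution at λ of the generalized spectral problem that is not identically zero. Then f and f′ are square-integrable on ℝ and λ · Σ_n ω_n |f(x_n)|² + λ² · Σ_n υ_n |f(x_n)|² = (1/4) ∫_ℝ |f(x)|² dx + ∫_ℝ |f′(x)|² dx > 0. -/
open scoped BigOperators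

open MeasureTheory

/-!
Between consecutive interaction points a solution is `A e^{t/2} + B e^{-t/2}`, and boundedness
kills the growing exponential on the two unbounded pieces, so there `f` and `f'` decay
exponentially. On every piece the flux `⟪f', f⟫_ℝ` has derivative `(1/4)|f|² + |f'|²`, and it
vanishes at `±∞`; integrating over `ℝ` therefore leaves only the jumps of the flux at the points
`x_n`, which the jump condition identifies with `(λ ω_n + λ² υ_n) |f(x_n)|²`. Positivity holds
because `f` is continuous and not identically zero.
-/

open Set Filter Topology
open scoped RealInnerProductSpace

theorem eq_of_tendsto_nhdsWithin_of_eqOn {X Y : Type*} [TopologicalSpace X] [TopologicalSpace Y]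
    [T2Space Y] {s : Set X} {a : X} [(𝓝[s] a).NeBot] {f g : X → Y} {y : Y}
    (hf : Tendsto f (𝓝[s] a) (𝓝 y)) (hfg : EqOn f g s) (hg : ContinuousAt g a) : y = g a :=
  tendsto_nhds_unique hf <| (hg.tendsto.mono_left nhdsWithin_le_nhds).congr' <|
    eventuallyEq_of_mem self_mem_nhdsWithin hfg.symm

section ExpSolution

variable {E : Type*} [NormedAddCommGroup E] [NormedSpace ℝ E]

theorem exists_eq_exp_smul_add_of_hasDerivAt {s : Set ℝ} (hs : IsOpen s) (hs' : IsPreconnected s)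
    {u u' : ℝ → E} (h : ∀ t ∈ s, HasDerivAt u (u' t) t ∧ HasDerivAt u' ((1 / 4 : ℝ) • u t) t) :
    ∃ A B : E, ∀ t ∈ s, u t = Real.exp (t / 2) • A + Real.exp (-(t / 2)) • B ∧
      u' t = (1 / 2 : ℝ) • (Real.exp (t / 2) • A - Real.exp (-(t / 2)) • B) := by
  have hconst {g : ℝ → E} (hg : ∀ t ∈ s, HasDerivAt g 0 t) : ∃ c, ∀ t ∈ s, g t = c :=
    hs.exists_is_const_of_deriv_eq_zero hs'
      (fun t ht => (hg t ht).differentiableAt.differentiableWithinAt) (fun t ht => (hg t ht).deriv)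
  obtain ⟨A, hA⟩ := hconst (g := fun t => Real.exp (-(t / 2)) • (u' t + (1 / 2 : ℝ) • u t))
    fun t ht => by
      refine ((((hasDerivAt_id t).div_const 2).neg.exp).smul
        ((h t ht).2.add ((h t ht).1.const_smul (1 / 2 : ℝ)))).congr_deriv ?_
      simp only [Pi.neg_apply, Pi.add_apply, Pi.smul_apply, id]
      module
  obtain ⟨B, hB⟩ := hconst (g := fun t => Real.exp (t / 2) • ((1 / 2 : ℝ) • u t - u' t))
    fun t ht => by
      refine ((((hasDerivAt_id t).div_const 2).exp).smul
        (((h t ht).1.const_smul (1 / 2 : ℝ)).sub (h t ht).2)).congr_deriv ?_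
      simp only [Pi.sub_apply, Pi.smul_apply, id]
      module
  refine ⟨A, B, fun t ht => ?_⟩
  have hA' : u' t + (1 / 2 : ℝ) • u t = Real.exp (t / 2) • A := by
    rw [← hA t ht, smul_smul, ← Real.exp_add, add_neg_cancel, Real.exp_zero, one_smul]
  have hB' : (1 / 2 : ℝ) • u t - u' t = Real.exp (-(t / 2)) • B := by
    rw [← hB t ht, smul_smul, ← Real.exp_add, neg_add_cancel, Real.exp_zero, one_smul]
  constructor
  · linear_combination (norm := module) hA' + hB'
  · linear_combination (norm := module) (1 / 2 : ℝ) • (hA' - hB')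

theorem tendsto_norm_exp_smul_add_atTop {A : E} (hA : A ≠ 0) (B : E) :
    Tendsto (fun t => ‖Real.exp (t / 2) • A + Real.exp (-(t / 2)) • B‖) atTop atTop := by
  have hgrow : Tendsto (fun t => Real.exp (t / 2) * ‖A‖) atTop atTop :=
    (Real.tendsto_exp_atTop.comp (tendsto_id.atTop_div_const two_pos)).atTop_mul_const
      (norm_pos_iff.2 hA)
  have hdecay : Tendsto (fun t => Real.exp (-(t / 2)) * ‖B‖) atTop (𝓝 0) := by
    simpa using (Real.tendsto_exp_atBot.comp
      (tendsto_neg_atTop_atBot.comp (tendsto_id.atTop_div_const two_pos))).mul_const ‖B‖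
  refine tendsto_atTop_mono (fun t => ?_) (hgrow.atTop_add hdecay.neg)
  simpa only [norm_smul, Real.norm_of_nonneg (Real.exp_pos _).le, sub_eq_add_neg] using
    norm_sub_le_norm_add (Real.exp (t / 2) • A) (Real.exp (-(t / 2)) • B)

theorem coeff_exp_half_eq_zero_of_bounded_Ioi {A B : E} {a C : ℝ}
    (h : ∀ t > a, ‖Real.exp (t / 2) • A + Real.exp (-(t / 2)) • B‖ ≤ C) : A = 0 := by
  by_contra hA
  obtain ⟨t, htC, hta⟩ :=
    (((tendsto_norm_exp_smul_add_atTop hA B).eventually_gt_atTop C).and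
      (eventually_gt_atTop a)).exists
  exact (h t hta).not_gt htC

theorem coeff_exp_neg_half_eq_zero_of_bounded_Iio {A B : E} {b C : ℝ}
    (h : ∀ t < b, ‖Real.exp (t / 2) • A + Real.exp (-(t / 2)) • B‖ ≤ C) : B = 0 :=
  coeff_exp_half_eq_zero_of_bounded_Ioi (a := -b) fun t ht => by
    simpa [neg_div, add_comm] using h (-t) (by linarith)

theorem norm_exp_half_smul_sq (t : ℝ) (A : E) :
    ‖Real.exp (t / 2) • A‖ ^ 2 = Real.exp t * ‖A‖ ^ 2 := by
  rw [norm_smul, Real.norm_of_nonneg (Real.exp_pos _).le, mul_pow, sq (Real.exp _),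
    ← Real.exp_add, add_halves]

theorem norm_exp_neg_half_smul_sq (t : ℝ) (A : E) :
    ‖Real.exp (-(t / 2)) • A‖ ^ 2 = Real.exp (-t) * ‖A‖ ^ 2 := by
  simpa [neg_div] using norm_exp_half_smul_sq (-t) A

end ExpSolution

theorem integral_eq_Iic_add_sum_add_Ioi {F : Type*} [NormedAddCommGroup F] [NormedSpace ℝ F]
    {g : ℝ → F} {x : ℕ → ℝ} {M : ℕ} (hx : x 0 ≤ x M) (hl : IntegrableOn g (Iic (x 0)))
    (hm : ∀ k < M, IntervalIntegrable g volume (x k) (x (k + 1)))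
    (hr : IntegrableOn g (Ioi (x M))) :
    Integrable g ∧ ∫ t, g t = (∫ t in Iic (x 0), g t) +
      (∑ k ∈ Finset.range M, ∫ t in x k..x (k + 1), g t) + ∫ t in Ioi (x M), g t := by
  have hIic : IntegrableOn g (Iic (x M)) := by
    rw [← Iic_union_Ioc_eq_Iic hx]
    exact hl.union ((intervalIntegrable_iff_integrableOn_Ioc_of_le hx).1
      (IntervalIntegrable.trans_iterate hm))
  refine ⟨by simpa [Iic_union_Ioi] using hIic.union hr, ?_⟩
  rw [← intervalIntegral.integral_Iic_add_Ioi hIic hr,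
    intervalIntegral.sum_integral_adjacent_intervals hm,
    ← intervalIntegral.integral_Iic_sub_Iic hl hIic]
  abel

theorem aestronglyMeasurable_of_ae_hasDerivAt {F : Type*} [NormedAddCommGroup F]
    [NormedSpace ℝ F] [CompleteSpace F] {f f' : ℝ → F} {μ : Measure ℝ}
    (h : ∀ᵐ t ∂μ, HasDerivAt f (f' t) t) : AEStronglyMeasurable f' μ :=
  (aestronglyMeasurable_deriv f μ).congr (h.mono fun _ ht => ht.deriv)

section EnergyDensity

variable {E : Type*} [NormedAddCommGroup E]

noncomputable def energyDensity (u u' : ℝ → E) (t : ℝ) : ℝ := 1 / 4 * ‖u t‖ ^ 2 + ‖u' t‖ ^ 2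

theorem memLp_two_of_integrable_energyDensity {u u' : ℝ → E} {μ : Measure ℝ}
    (hu : AEStronglyMeasurable u μ) (hu' : AEStronglyMeasurable u' μ)
    (h : Integrable (energyDensity u u') μ) :
    MemLp u 2 μ ∧ MemLp u' 2 μ ∧
      ∫ t, energyDensity u u' t ∂μ = 1 / 4 * ∫ t, ‖u t‖ ^ 2 ∂μ + ∫ t, ‖u' t‖ ^ 2 ∂μ := by
  have hu2 : Integrable (fun t => ‖u t‖ ^ 2) μ :=
    (h.const_mul 4).mono' (hu.norm.pow 2) <| ae_of_all _ fun t => by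
      rw [Real.norm_of_nonneg (by positivity), energyDensity]
      nlinarith [sq_nonneg ‖u' t‖]
  have hu'2 : Integrable (fun t => ‖u' t‖ ^ 2) μ :=
    h.mono' (hu'.norm.pow 2) <| ae_of_all _ fun t => by
      rw [Real.norm_of_nonneg (by positivity), energyDensity]
      nlinarith [sq_nonneg ‖u t‖]
  refine ⟨(memLp_two_iff_integrable_sq_norm hu).2 hu2,
    (memLp_two_iff_integrable_sq_norm hu').2 hu'2, ?_⟩
  rw [← integral_const_mul, ← integral_add (hu2.const_mul _) hu'2]
  rfl

end EnergyDensity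

section Flux

variable {E : Type*} [NormedAddCommGroup E] [InnerProductSpace ℝ E]

theorem hasDerivAt_inner_deriv_self {u u' : ℝ → E} {t : ℝ} (hu : HasDerivAt u (u' t) t)
    (hu' : HasDerivAt u' ((1 / 4 : ℝ) • u t) t) :
    HasDerivAt (fun s => ⟪u' s, u s⟫) (energyDensity u u' t) t := by
  refine (hu'.inner ℝ hu).congr_deriv ?_
  rw [real_inner_smul_left, real_inner_self_eq_norm_sq, real_inner_self_eq_norm_sq, energyDensity]
  ring

variable {u u' : ℝ → E}

theorem integral_energyDensity_Iic {b C : ℝ} {L : E}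
    (hode : ∀ t < b, HasDerivAt u (u' t) t ∧ HasDerivAt u' ((1 / 4 : ℝ) • u t) t)
    (hbd : ∀ t < b, ‖u t‖ ≤ C) (hu : ContinuousWithinAt u (Iio b) b)
    (hL : Tendsto u' (𝓝[<] b) (𝓝 L)) :
    IntegrableOn (energyDensity u u') (Iic b) ∧ ∫ t in Iic b, energyDensity u u' t = ⟪L, u b⟫ := by
  obtain ⟨A, B, hAB⟩ := exists_eq_exp_smul_add_of_hasDerivAt isOpen_Iio isPreconnected_Iio hode
  obtain rfl : B = 0 :=
    coeff_exp_neg_half_eq_zero_of_bounded_Iio fun t ht => (hAB t ht).1 ▸ hbd t ht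
  simp only [smul_zero, add_zero, sub_zero] at hAB
  have hub : u b = Real.exp (b / 2) • A :=
    eq_of_tendsto_nhdsWithin_of_eqOn (g := fun t => Real.exp (t / 2) • A) hu.tendsto
      (fun t ht => (hAB t ht).1) (by fun_prop)
  have hLb : L = (1 / 2 : ℝ) • Real.exp (b / 2) • A :=
    eq_of_tendsto_nhdsWithin_of_eqOn (g := fun t => (1 / 2 : ℝ) • Real.exp (t / 2) • A) hL
      (fun t ht => (hAB t ht).2) (by fun_prop)
  have hdens : EqOn (energyDensity u u') (fun t => ‖A‖ ^ 2 / 2 * Real.exp t) (Iio b) := by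
    intro t ht
    rw [energyDensity, (hAB t ht).1, (hAB t ht).2, norm_smul (1 / 2 : ℝ), mul_pow,
      norm_exp_half_smul_sq]
    norm_num
    ring
  rw [integrableOn_Iic_iff_integrableOn_Iio, integral_Iic_eq_integral_Iio,
    setIntegral_congr_fun measurableSet_Iio hdens, integral_const_mul,
    ← integral_Iic_eq_integral_Iio, integral_exp_Iic, hLb, hub, real_inner_smul_left,
    real_inner_self_eq_norm_sq, norm_exp_half_smul_sq]
  refine ⟨IntegrableOn.congr_fun ?_ hdens.symm measurableSet_Iio, by ring⟩
  exact ((integrableOn_exp_Iic b).mono_set Iio_subset_Iic_self).const_mul _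

theorem integral_energyDensity_Ioi {a C : ℝ} {R : E}
    (hode : ∀ t > a, HasDerivAt u (u' t) t ∧ HasDerivAt u' ((1 / 4 : ℝ) • u t) t)
    (hbd : ∀ t > a, ‖u t‖ ≤ C) (hu : ContinuousWithinAt u (Ioi a) a)
    (hR : Tendsto u' (𝓝[>] a) (𝓝 R)) :
    IntegrableOn (energyDensity u u') (Ioi a) ∧ ∫ t in Ioi a, energyDensity u u' t = -⟪R, u a⟫ := by
  obtain ⟨A, B, hAB⟩ := exists_eq_exp_smul_add_of_hasDerivAt isOpen_Ioi isPreconnected_Ioi hode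
  obtain rfl : A = 0 :=
    coeff_exp_half_eq_zero_of_bounded_Ioi fun t ht => (hAB t ht).1 ▸ hbd t ht
  simp only [smul_zero, zero_add, zero_sub, smul_neg] at hAB
  have hua : u a = Real.exp (-(a / 2)) • B :=
    eq_of_tendsto_nhdsWithin_of_eqOn (g := fun t => Real.exp (-(t / 2)) • B) hu.tendsto
      (fun t ht => (hAB t ht).1) (by fun_prop)
  have hRa : R = -((1 / 2 : ℝ) • Real.exp (-(a / 2)) • B) :=
    eq_of_tendsto_nhdsWithin_of_eqOn (g := fun t => -((1 / 2 : ℝ) • Real.exp (-(t / 2)) • B))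
      hR (fun t ht => (hAB t ht).2) (by fun_prop)
  have hdens : EqOn (energyDensity u u') (fun t => ‖B‖ ^ 2 / 2 * Real.exp (-t)) (Ioi a) := by
    intro t ht
    rw [energyDensity, (hAB t ht).1, (hAB t ht).2, norm_neg, norm_smul (1 / 2 : ℝ), mul_pow,
      norm_exp_neg_half_smul_sq]
    norm_num
    ring
  rw [setIntegral_congr_fun measurableSet_Ioi hdens, integral_const_mul, integral_exp_neg_Ioi,
    hRa, hua, inner_neg_left, real_inner_smul_left, real_inner_self_eq_norm_sq,
    norm_exp_neg_half_smul_sq]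
  refine ⟨IntegrableOn.congr_fun ?_ hdens.symm measurableSet_Ioi, by ring⟩
  exact (by simpa using exp_neg_integrableOn_Ioi a one_pos :
    IntegrableOn (fun t => Real.exp (-t)) (Ioi a)).const_mul _

theorem integral_energyDensity_interval {a b : ℝ} (hab : a < b) {L R : E}
    (hode : ∀ t ∈ Ioo a b, HasDerivAt u (u' t) t ∧ HasDerivAt u' ((1 / 4 : ℝ) • u t) t)
    (hua : ContinuousWithinAt u (Ioi a) a) (hub : ContinuousWithinAt u (Iio b) b)
    (hR : Tendsto u' (𝓝[>] a) (𝓝 R)) (hL : Tendsto u' (𝓝[<] b) (𝓝 L)) :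
    IntervalIntegrable (energyDensity u u') volume a b ∧
      ∫ t in a..b, energyDensity u u' t = ⟪L, u b⟫ - ⟪R, u a⟫ := by
  obtain ⟨A, B, hAB⟩ := exists_eq_exp_smul_add_of_hasDerivAt isOpen_Ioo isPreconnected_Ioo hode
  have hint : IntervalIntegrable (energyDensity u u') volume a b := by
    have hexplicit : EqOn
        (energyDensity (fun t => Real.exp (t / 2) • A + Real.exp (-(t / 2)) • B)
          (fun t => (1 / 2 : ℝ) • (Real.exp (t / 2) • A - Real.exp (-(t / 2)) • B)))
        (energyDensity u u') (Ioo a b) := fun t ht => by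
      rw [energyDensity, energyDensity, (hAB t ht).1, (hAB t ht).2]
    rw [intervalIntegrable_iff_integrableOn_Ioo_of_le hab.le]
    refine IntegrableOn.congr_fun ?_ hexplicit measurableSet_Ioo
    exact (Continuous.integrableOn_Icc (by unfold energyDensity; fun_prop)).mono_set
      Ioo_subset_Icc_self
  exact ⟨hint, intervalIntegral.integral_eq_sub_of_hasDerivAt_of_tendsto hab
    (fun t ht => hasDerivAt_inner_deriv_self (hode t ht).1 (hode t ht).2) hint
    (hR.inner hua) (hL.inner hub)⟩

theorem integral_energyDensity_eq_sum_inner {M : ℕ} {x : ℕ → ℝ} (hx : StrictMonoOn x (Iic M))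
    {u u' : ℝ → E} {C : ℝ} (hu : Continuous u) (hbd : ∀ t, ‖u t‖ ≤ C)
    (hode : ∀ t, (∀ n ≤ M, t ≠ x n) →
      HasDerivAt u (u' t) t ∧ HasDerivAt u' ((1 / 4 : ℝ) • u t) t)
    {L R : ℕ → E} (hL : ∀ n ≤ M, Tendsto u' (𝓝[<] x n) (𝓝 (L n)))
    (hR : ∀ n ≤ M, Tendsto u' (𝓝[>] x n) (𝓝 (R n))) :
    Integrable (energyDensity u u') ∧
      ∫ t, energyDensity u u' t = ∑ n ∈ Finset.range (M + 1), ⟪L n - R n, u (x n)⟫ := by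
  have hmono {i j : ℕ} (hij : i ≤ j) (hj : j ≤ M) : x i ≤ x j :=
    hx.monotoneOn (mem_Iic.2 (hij.trans hj)) (mem_Iic.2 hj) hij
  obtain ⟨hlI, hl⟩ := integral_energyDensity_Iic (b := x 0)
    (fun t ht => hode t fun n hn => (ht.trans_le (hmono n.zero_le hn)).ne) (fun t _ => hbd t)
    hu.continuousWithinAt (hL 0 M.zero_le)
  obtain ⟨hrI, hr⟩ := integral_energyDensity_Ioi (a := x M)
    (fun t ht => hode t fun n hn => ((hmono hn le_rfl).trans_lt ht).ne') (fun t _ => hbd t)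
    hu.continuousWithinAt (hR M le_rfl)
  have hm (k : ℕ) (hk : k < M) := integral_energyDensity_interval
    (hx (mem_Iic.2 hk.le) (mem_Iic.2 hk) (Nat.lt_add_one k))
    (fun t ht => hode t fun n hn => by
      rcases le_or_gt n k with hnk | hnk
      · exact ((hmono hnk hk.le).trans_lt ht.1).ne'
      · exact (ht.2.trans_le (hmono hnk hn)).ne)
    hu.continuousWithinAt hu.continuousWithinAt (hR k hk.le) (hL (k + 1) hk)
  obtain ⟨hI, hsplit⟩ := integral_eq_Iic_add_sum_add_Ioi (hmono M.zero_le le_rfl) hlI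
    (fun k hk => (hm k hk).1) hrI
  refine ⟨hI, ?_⟩
  rw [hsplit, hl, hr, Finset.sum_congr rfl fun k hk => (hm k (Finset.mem_range.1 hk)).2]
  simp only [inner_sub_left, Finset.sum_sub_distrib]
  rw [Finset.sum_range_succ' (fun n => ⟪L n, u (x n)⟫),
    Finset.sum_range_succ (fun n => ⟪R n, u (x n)⟫)]
  ring

end Flux

theorem IsSol.integral_energyDensity_eq_sum {M : ℕ} {x w v : ℕ → ℝ} (hx : StrictMonoOn x (Iic M))
    {lam : ℝ} {f f' : ℝ → ℂ} (hsol : IsSol (M + 1) x w v lam f f') {C : ℝ}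
    (hC : ∀ t, ‖f t‖ ≤ C) :
    AEStronglyMeasurable f' volume ∧ Integrable (energyDensity f f') ∧
      ∫ t, energyDensity f f' t =
        ∑ n ∈ Finset.range (M + 1), (lam * w n + lam ^ 2 * v n) * ‖f (x n)‖ ^ 2 := by
  obtain ⟨hcont, hode, hjump⟩ := hsol
  choose! L R hL hR hLR using hjump
  have hode' (t : ℝ) (ht : ∀ n ≤ M, t ≠ x n) :
      HasDerivAt f (f' t) t ∧ HasDerivAt f' ((1 / 4 : ℝ) • f t) t := by
    have := hode t fun n hn => ht n (Nat.lt_succ_iff.1 hn)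
    rwa [Complex.real_smul, Complex.ofReal_div, Complex.ofReal_one, Complex.ofReal_ofNat]
  have hflux (n : ℕ) (hn : n ∈ Finset.range (M + 1)) :
      ⟪L n - R n, f (x n)⟫ = (lam * w n + lam ^ 2 * v n) * ‖f (x n)‖ ^ 2 := by
    have : L n - R n = (lam * w n + lam ^ 2 * v n : ℝ) • f (x n) := by
      rw [Complex.real_smul]
      push_cast
      linear_combination -hLR n (Finset.mem_range.1 hn)
    rw [this, real_inner_smul_left, real_inner_self_eq_norm_sq]
  obtain ⟨hint, hsum⟩ := integral_energyDensity_eq_sum_inner hx hcont hC hode'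
    (fun n hn => hL n (Nat.lt_succ_of_le hn)) (fun n hn => hR n (Nat.lt_succ_of_le hn))
  refine ⟨aestronglyMeasurable_of_ae_hasDerivAt (f := f) ?_, hint,
    hsum.trans (Finset.sum_congr rfl hflux)⟩
  exact (((Set.finite_Iic M).image x).countable.ae_notMem volume).mono fun t ht =>
    (hode' t fun n hn hxn => ht ⟨n, hn, hxn.symm⟩).1

theorem stmt_2_general (N : ℕ) (hN : 1 ≤ N) (x w v : ℕ → ℝ)
    (hx : ∀ i j, i < j → j < N → x i < x j)
    (lam : ℝ) (f f' : ℝ → ℂ)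
    (hsol : IsSol N x w v (lam : ℂ) f f')
    (hbd : ∃ C : ℝ, ∀ t : ℝ, ‖f t‖ ≤ C)
    (hne : ∃ t : ℝ, f t ≠ 0) :
    MemLp f 2 volume ∧ MemLp f' 2 volume ∧
    lam * (∑ n ∈ Finset.range N, w n * ‖f (x n)‖ ^ 2)
        + lam ^ 2 * (∑ n ∈ Finset.range N, v n * ‖f (x n)‖ ^ 2)
      = (1 / 4) * (∫ t : ℝ, ‖f t‖ ^ 2) + (∫ t : ℝ, ‖f' t‖ ^ 2) ∧
    0 < (1 / 4) * (∫ t : ℝ, ‖f t‖ ^ 2) + (∫ t : ℝ, ‖f' t‖ ^ 2) := by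
  obtain ⟨M, rfl⟩ : ∃ M, N = M + 1 := ⟨N - 1, by omega⟩
  obtain ⟨C, hC⟩ := hbd
  obtain ⟨hf'meas, hint, hsum⟩ := hsol.integral_energyDensity_eq_sum
    (fun i _ j hj hij => hx i j hij (Nat.lt_succ_of_le hj)) hC
  obtain ⟨hf2, hf'2, henergy⟩ :=
    memLp_two_of_integrable_energyDensity hsol.1.aestronglyMeasurable hf'meas hint
  have hpos : 0 < ∫ t, ‖f t‖ ^ 2 := by
    obtain ⟨t₀, ht₀⟩ := hne
    exact integral_pos_of_integrable_nonneg_nonzero (x := t₀) (hsol.1.norm.pow 2)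
      ((memLp_two_iff_integrable_sq_norm hsol.1.aestronglyMeasurable).1 hf2)
      (fun t => by positivity) (by simpa using ht₀)
  have hnonneg : 0 ≤ ∫ t, ‖f' t‖ ^ 2 := integral_nonneg fun t => sq_nonneg ‖f' t‖
  refine ⟨hf2, hf'2, ?_, by linarith⟩
  rw [← henergy, hsum, Finset.mul_sum, Finset.mul_sum, ← Finset.sum_add_distrib]
  exact Finset.sum_congr rfl fun n _ => by ring

/-- a nontrivial bounded solution at a real `λ` is square-integrable together
with its derivative, and the Lagrange-type identity
`λ Σ ω_n |f(x_n)|² + λ² Σ υ_n |f(x_n)|² = (1/4)∫|f|² + ∫|f'|² > 0` holds. -/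
theorem stmt_2 (N : ℕ) (hN : 1 ≤ N) (x w v : ℕ → ℝ)
    (hx : ∀ i j, i < j → j < N → x i < x j)
    (hv : ∀ n, n < N → 0 ≤ v n) (hnd : ∀ n, n < N → 0 < |w n| + v n)
    (lam : ℝ) (f f' : ℝ → ℂ)
    (hsol : IsSol N x w v (lam : ℂ) f f')
    (hbd : ∃ C : ℝ, ∀ t : ℝ, ‖f t‖ ≤ C)
    (hne : ∃ t : ℝ, f t ≠ 0) :
    MemLp f 2 volume ∧ MemLp f' 2 volume ∧
    lam * (∑ n ∈ Finset.range N, w n * ‖f (x n)‖ ^ 2)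
        + lam ^ 2 * (∑ n ∈ Finset.range N, v n * ‖f (x n)‖ ^ 2)
      = (1 / 4) * (∫ t : ℝ, ‖f t‖ ^ 2) + (∫ t : ℝ, ‖f' t‖ ^ 2) ∧
    0 < (1 / 4) * (∫ t : ℝ, ‖f t‖ ^ 2) + (∫ t : ℝ, ‖f' t‖ ^ 2) :=
  stmt_2_general N hN x w v hx lam f f' hsol hbd hne
end

section
/- Let λ ∈ ℝ and let f be a bounded solution at λ of the generalized spectral problem that is not identically zero. Then λ · ( Σ_n ω_n |f(x_n)|² + 2λ · Σ_n υ_n |f(x_n)|² ) > 0; in particular the norming constant Σ_n ω_n |f(x_n)|² + 2λ Σ_n υ_n |f(x_n)|² is nonzero and has the same sign as λ. -/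
open scoped BigOperators

/-!
Between consecutive nodes a solution satisfies `f'' = f / 4`, so `f' + c f` evolves like
`e^{c t}` for `c = ±1/2`; on the two unbounded node-free intervals boundedness forces
`f' = ∓ f / 2`. The energy `Re (f' · conj f)` has derivative `|f'|² + |f|² / 4 ≥ 0` between nodes
and drops by `(λ ω_n + λ² υ_n) |f(x_n)|²` across `x_n`, so summing over the nodes gives
`Σ (λ ω_n + λ² υ_n) |f(x_n)|² ≥ |f(x_0)|² / 2 + |f(x_{N-1})|² / 2`. Here `f(x_0) ≠ 0`, since
otherwise uniqueness of the Cauchy problem propagates `f = 0` from left to right. Adding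
`λ² Σ υ_n |f(x_n)|² ≥ 0` gives the claim.
-/

open Set Filter Topology ComplexConjugate

def IsFreeSolOn (f f' : ℝ → ℂ) (S : Set ℝ) : Prop :=
  ∀ u ∈ S, HasDerivAt f (f' u) u ∧ HasDerivAt f' ((1 / 4) * f u) u

namespace IsFreeSolOn

variable {f f' : ℝ → ℂ} {S : Set ℝ} {c : ℝ}

theorem hasDerivAt_add_mul (h : IsFreeSolOn f f' S) (hc : c ^ 2 = 1 / 4) {u : ℝ} (hu : u ∈ S) :
    HasDerivAt (fun t => f' t + c * f t) (c * (f' u + c * f u)) u := by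
  have hc' : (c : ℂ) ^ 2 = 1 / 4 := by
    rw [← Complex.ofReal_pow, hc]
    push_cast
    ring
  refine ((h u hu).2.add ((h u hu).1.const_mul (c : ℂ))).congr_deriv ?_
  linear_combination -(f u) * hc'

theorem add_mul_eq_mul_exp (h : IsFreeSolOn f f' S) (hc : c ^ 2 = 1 / 4) {s t : ℝ}
    (hst : uIcc s t ⊆ S) :
    f' t + c * f t = (f' s + c * f s) * Real.exp (c * (t - s)) := by
  set F : ℝ → ℂ := fun u => (f' u + c * f u) * Real.exp (-c * (u - s))
  have hF : ∀ u ∈ uIcc s t, HasDerivWithinAt F 0 (uIcc s t) u := fun u hu => by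
    have hin : HasDerivAt (fun u : ℝ => -c * (u - s)) (-c) u := by
      simpa using ((hasDerivAt_id' u).sub_const s).const_mul (-c)
    refine (((h.hasDerivAt_add_mul hc (hst hu)).mul hin.exp.ofReal_comp).congr_deriv ?_
      ).hasDerivWithinAt
    push_cast
    ring
  have hconst := (convex_uIcc s t).norm_image_sub_le_of_norm_hasDerivWithin_le hF
    (fun _ _ => le_of_eq norm_zero) left_mem_uIcc right_mem_uIcc
  rw [zero_mul, norm_le_zero_iff, sub_eq_zero] at hconst
  simp only [F, sub_self, mul_zero, Real.exp_zero, Complex.ofReal_one, mul_one] at hconst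
  rw [← hconst, mul_assoc, ← Complex.ofReal_mul, ← Real.exp_add]
  simp

theorem add_mul_eq_of_tendsto (h : IsFreeSolOn f f' S) (hS : S.OrdConnected) (hc : c ^ 2 = 1 / 4)
    {t : ℝ} (ht : t ∈ S) {a : ℝ} {l : Filter ℝ} [l.NeBot] (hla : l ≤ 𝓝 a) (hlS : S ∈ l)
    (hf : ContinuousAt f a) {R : ℂ} (hR : Tendsto f' l (𝓝 R)) :
    f' t + c * f t = (R + c * f a) * Real.exp (c * (t - a)) := by
  have hexp : Continuous fun s : ℝ => ((Real.exp (c * (t - s)) : ℝ) : ℂ) := by fun_prop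
  have hlim : Tendsto (fun s => (f' s + c * f s) * Real.exp (c * (t - s))) l
      (𝓝 ((R + c * f a) * Real.exp (c * (t - a)))) :=
    (hR.add ((hf.tendsto.mono_left hla).const_mul _)).mul ((hexp.tendsto a).mono_left hla)
  refine tendsto_nhds_unique (tendsto_const_nhds.congr' ?_) hlim
  filter_upwards [hlS] with s hs
  exact h.add_mul_eq_mul_exp hc (hS.uIcc_subset hs ht)

theorem eq_zero_of_tendsto_zero (h : IsFreeSolOn f f' S) (hS : S.OrdConnected) {t : ℝ} (ht : t ∈ S)
    {a : ℝ} {l : Filter ℝ} [l.NeBot] (hla : l ≤ 𝓝 a) (hlS : S ∈ l) (hf : ContinuousAt f a)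
    (hfa : f a = 0) (hR : Tendsto f' l (𝓝 0)) : f t = 0 ∧ f' t = 0 := by
  have key : ∀ c : ℝ, c ^ 2 = 1 / 4 → f' t + c * f t = 0 := fun c hc => by
    simpa [hfa] using h.add_mul_eq_of_tendsto hS hc ht hla hlS hf hR
  have h₁ := key (1 / 2) (by norm_num)
  have h₂ := key (-1 / 2) (by norm_num)
  push_cast at h₁ h₂
  constructor
  · linear_combination h₁ - h₂
  · linear_combination (h₁ + h₂) / 2

theorem add_mul_eq_zero_of_bounded (h : IsFreeSolOn f f' S) (hS : S.OrdConnected)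
    (hc : c ^ 2 = 1 / 4) {l : Filter ℝ} [l.NeBot] (hl : Tendsto (fun t => c * t) l atTop)
    (hlS : S ∈ l) {C : ℝ} (hC : ∀ t, ‖f t‖ ≤ C) {s : ℝ} (hs : s ∈ S) :
    f' s + c * f s = 0 := by
  set E : ℝ → ℝ := fun t => (Real.exp (c * (t - s)))⁻¹
  have hrepr : ∀ t ∈ S, f' s + c * f s
      = 2 * c * (E t * f t) + (f' s + -c * f s) * (E t : ℂ) ^ 2 := fun t ht => by
    have h₁ := h.add_mul_eq_mul_exp hc (hS.uIcc_subset hs ht)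
    have h₂ := h.add_mul_eq_mul_exp (c := -c) (by rwa [neg_sq]) (hS.uIcc_subset hs ht)
    rw [neg_mul, Real.exp_neg] at h₂
    have hE : (Real.exp (c * (t - s)) : ℂ) ≠ 0 := by exact_mod_cast (Real.exp_pos _).ne'
    simp only [E, Complex.ofReal_inv, Complex.ofReal_neg] at h₂ ⊢
    generalize (Real.exp (c * (t - s)) : ℂ) = e at hE h₁ h₂ ⊢
    linear_combination -e⁻¹ * (h₁ - h₂) - (f' s + c * f s) * mul_inv_cancel₀ hE
  have hE : Tendsto E l (𝓝 0) := by
    refine tendsto_inv_atTop_zero.comp (Real.tendsto_exp_atTop.comp ?_)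
    exact (tendsto_atTop_add_const_right _ (-(c * s)) hl).congr fun t => by ring
  have hE' : Tendsto (fun t => (E t : ℂ)) l (𝓝 0) := by
    have := (Complex.continuous_ofReal.tendsto 0).comp hE
    rwa [Complex.ofReal_zero] at this
  have hlim : Tendsto (fun t => 2 * c * (E t * f t) + (f' s + -c * f s) * (E t : ℂ) ^ 2) l
      (𝓝 0) := by
    have hEf : Tendsto (fun t => (E t : ℂ) * f t) l (𝓝 0) :=
      hE'.zero_mul_isBoundedUnder_le (isBoundedUnder_of ⟨C, fun t => hC t⟩)
    simpa using (hEf.const_mul (2 * c : ℂ)).add ((hE'.pow 2).const_mul (f' s + -c * f s))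
  exact tendsto_nhds_unique (tendsto_const_nhds.congr' (eventually_of_mem hlS hrepr)) hlim

theorem tendsto_of_bounded (h : IsFreeSolOn f f' S) (hS : S.OrdConnected) (hc : c ^ 2 = 1 / 4)
    {l : Filter ℝ} [l.NeBot] (hl : Tendsto (fun t => c * t) l atTop) (hlS : S ∈ l) {C : ℝ}
    (hC : ∀ t, ‖f t‖ ≤ C) {a : ℝ} (hf : ContinuousAt f a) {l' : Filter ℝ} (hl'a : l' ≤ 𝓝 a)
    (hl'S : S ∈ l') : Tendsto f' l' (𝓝 (-(c * f a))) := by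
  refine (((hf.tendsto.mono_left hl'a).const_mul _).neg).congr' ?_
  filter_upwards [hl'S] with s hs
  linear_combination -(h.add_mul_eq_zero_of_bounded hS hc hl hlS hC hs)

theorem hasDerivAt_energy (h : IsFreeSolOn f f' S) {u : ℝ} (hu : u ∈ S) :
    HasDerivAt (fun t => (f' t * conj (f t)).re) (‖f' u‖ ^ 2 + ‖f u‖ ^ 2 / 4) u := by
  have hconj : HasDerivAt (fun t => conj (f t)) (conj (f' u)) u :=
    Complex.conjCLE.hasFDerivAt.comp_hasDerivAt u (h u hu).1
  refine (Complex.reCLM.hasFDerivAt.comp_hasDerivAt u ((h u hu).2.mul hconj)).congr_deriv ?_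
  rw [mul_assoc, Complex.mul_conj', Complex.mul_conj', Complex.reCLM_apply,
    ← Complex.ofReal_re (_ + _)]
  congr 1
  push_cast
  ring

theorem monotoneOn_energy (h : IsFreeSolOn f f' S) (hS : S.OrdConnected) :
    MonotoneOn (fun t => (f' t * conj (f t)).re) S :=
  monotoneOn_of_hasDerivWithinAt_nonneg hS.convex
    (fun u hu => (h.hasDerivAt_energy hu).continuousAt.continuousWithinAt)
    (fun u hu => (h.hasDerivAt_energy (interior_subset hu)).hasDerivWithinAt)
    (fun u _ => by positivity)

theorem re_mul_conj_le_of_tendsto {a b : ℝ} (hab : a < b) (h : IsFreeSolOn f f' (Ioo a b))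
    (hf : Continuous f) {R L : ℂ} (hR : Tendsto f' (𝓝[>] a) (𝓝 R))
    (hL : Tendsto f' (𝓝[<] b) (𝓝 L)) :
    (R * conj (f a)).re ≤ (L * conj (f b)).re := by
  set g : ℝ → ℝ := fun t => (f' t * conj (f t)).re
  have hg := h.monotoneOn_energy ordConnected_Ioo
  have hlim : ∀ {p : ℝ} {l : Filter ℝ} {D : ℂ}, l ≤ 𝓝 p → Tendsto f' l (𝓝 D) →
      Tendsto g l (𝓝 (D * conj (f p)).re) := fun hlp hD =>
    (Complex.continuous_re.tendsto _).comp
      (hD.mul (((Complex.continuous_conj.comp hf).tendsto _).mono_left hlp))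
  obtain ⟨m, hm⟩ : (Ioo a b).Nonempty := nonempty_Ioo.2 hab
  calc (R * conj (f a)).re ≤ g m :=
        le_of_tendsto (hlim nhdsWithin_le_nhds hR) <| by
          filter_upwards [Ioo_mem_nhdsGT hm.1] with s hs
          exact hg ⟨hs.1, hs.2.trans hm.2⟩ hm hs.2.le
    _ ≤ (L * conj (f b)).re :=
        ge_of_tendsto (hlim nhdsWithin_le_nhds hL) <| by
          filter_upwards [Ioo_mem_nhdsLT hm.2] with s hs
          exact hg hm ⟨hm.1.trans hs.1, hs.2⟩ hs.1.le

end IsFreeSolOn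

theorem re_mul_conj_sub_re_mul_conj {L R a : ℂ} {q : ℝ} (h : R - L = -q * a) :
    (L * conj a).re - (R * conj a).re = q * ‖a‖ ^ 2 := by
  rw [← Complex.sub_re, ← sub_mul, show L - R = q * a by linear_combination -h, mul_assoc,
    Complex.mul_conj']
  norm_cast

theorem sub_le_sum_sub_of_le_succ {G H : ℕ → ℝ} {M : ℕ} (h : ∀ m < M, H m ≤ G (m + 1)) :
    G 0 - H M ≤ ∑ n ∈ Finset.range (M + 1), (G n - H n) := by
  induction M with
  | zero => simp
  | succ M ih =>
    rw [Finset.sum_range_succ]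
    linarith [ih fun m hm => h m (by omega), h M (by omega)]

namespace IsSol

variable {N : ℕ} {x w v : ℕ → ℝ} {z : ℂ} {f f' : ℝ → ℂ}

theorem isFreeSolOn (h : IsSol N x w v z f f') {S : Set ℝ} (hS : ∀ n < N, x n ∉ S) :
    IsFreeSolOn f f' S :=
  fun u hu => h.2.1 u fun n hn hun => hS n hn (hun ▸ hu)

theorem tendsto_nhdsGT_zero_of_apply_eq_zero (h : IsSol N x w v z f f') {n : ℕ} (hn : n < N)
    (hfn : f (x n) = 0) (hL : Tendsto f' (𝓝[<] x n) (𝓝 0)) : Tendsto f' (𝓝[>] x n) (𝓝 0) := by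
  obtain ⟨L, R, hL', hR, hLR⟩ := h.2.2 n hn
  rw [tendsto_nhds_unique hL' hL, hfn, mul_zero, sub_zero] at hLR
  rwa [← hLR]

variable (hx : StrictMonoOn x (Iio N))
include hx

theorem isFreeSolOn_Iio (h : IsSol N x w v z f f') : IsFreeSolOn f f' (Iio (x 0)) :=
  h.isFreeSolOn fun n hn => not_lt.2 <|
    hx.monotoneOn (mem_Iio.2 (by omega)) (mem_Iio.2 hn) (Nat.zero_le n)

theorem isFreeSolOn_Ioi (h : IsSol N x w v z f f') : IsFreeSolOn f f' (Ioi (x (N - 1))) :=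
  h.isFreeSolOn fun n hn => not_lt.2 <|
    hx.monotoneOn (mem_Iio.2 hn) (mem_Iio.2 (by omega)) (by omega)

theorem isFreeSolOn_Ioo (h : IsSol N x w v z f f') {m : ℕ} (hm : m + 1 < N) :
    IsFreeSolOn f f' (Ioo (x m) (x (m + 1))) := by
  refine h.isFreeSolOn fun n hn hxn => ?_
  rcases le_or_gt n m with hnm | hnm
  · exact hxn.1.not_ge (hx.monotoneOn (mem_Iio.2 hn) (mem_Iio.2 (by omega)) hnm)
  · exact hxn.2.not_ge (hx.monotoneOn (mem_Iio.2 hm) (mem_Iio.2 hn) hnm)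

theorem tendsto_nhdsLT_x_zero (h : IsSol N x w v z f f') {C : ℝ} (hC : ∀ t, ‖f t‖ ≤ C) :
    Tendsto f' (𝓝[<] x 0) (𝓝 (f (x 0) / 2)) := by
  have := (h.isFreeSolOn_Iio hx).tendsto_of_bounded ordConnected_Iio (c := -1 / 2) (by norm_num)
    (tendsto_id.const_mul_atBot_of_neg (by norm_num)) (Iio_mem_atBot _) hC
    (h.1.continuousAt (x := x 0)) nhdsWithin_le_nhds self_mem_nhdsWithin
  convert this using 2
  push_cast
  ring

theorem tendsto_nhdsGT_x_last (h : IsSol N x w v z f f') {C : ℝ} (hC : ∀ t, ‖f t‖ ≤ C) :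
    Tendsto f' (𝓝[>] x (N - 1)) (𝓝 (-f (x (N - 1)) / 2)) := by
  have := (h.isFreeSolOn_Ioi hx).tendsto_of_bounded ordConnected_Ioi (c := 1 / 2) (by norm_num)
    (tendsto_id.const_mul_atTop (by norm_num)) (Ioi_mem_atTop _) hC
    (h.1.continuousAt (x := x (N - 1))) nhdsWithin_le_nhds self_mem_nhdsWithin
  convert this using 2
  push_cast
  ring

theorem eq_zero_of_apply_x_zero_eq_zero (h : IsSol N x w v z f f') (hN : 0 < N) {C : ℝ}
    (hC : ∀ t, ‖f t‖ ≤ C) (h0 : f (x 0) = 0) (t : ℝ) : f t = 0 := by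
  obtain ⟨M, rfl⟩ : ∃ M, N = M + 1 := ⟨N - 1, by omega⟩
  have key : ∀ n < M + 1, EqOn f 0 (Iic (x n)) ∧ Tendsto f' (𝓝[<] x n) (𝓝 0) := by
    intro n
    induction n with
    | zero =>
      intro _
      have hL : Tendsto f' (𝓝[<] x 0) (𝓝 0) := by
        simpa [h0] using h.tendsto_nhdsLT_x_zero hx hC
      refine ⟨fun t ht => ?_, hL⟩
      rcases (mem_Iic.1 ht).lt_or_eq with ht | rfl
      · exact ((h.isFreeSolOn_Iio hx).eq_zero_of_tendsto_zero ordConnected_Iio ht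
          nhdsWithin_le_nhds self_mem_nhdsWithin h.1.continuousAt h0 hL).1
      · exact h0
    | succ m ih =>
      intro hm
      obtain ⟨hz, hL⟩ := ih (by omega)
      have hlt : x m < x (m + 1) := hx (mem_Iio.2 (by omega)) (mem_Iio.2 hm) (by omega)
      have hgap : ∀ t ∈ Ioo (x m) (x (m + 1)), f t = 0 ∧ f' t = 0 := fun t ht =>
        (h.isFreeSolOn_Ioo hx hm).eq_zero_of_tendsto_zero ordConnected_Ioo ht nhdsWithin_le_nhds
          (Ioo_mem_nhdsGT hlt) h.1.continuousAt (hz self_mem_Iic)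
          (h.tendsto_nhdsGT_zero_of_apply_eq_zero (by omega) (hz self_mem_Iic) hL)
      have hIio : EqOn f 0 (Iio (x (m + 1))) := fun t ht =>
        (le_or_gt t (x m)).elim (fun h' => hz h') fun h' => (hgap t ⟨h', ht⟩).1
      refine ⟨?_, tendsto_const_nhds.congr' ?_⟩
      · simpa using hIio.closure h.1 continuous_const
      · filter_upwards [Ioo_mem_nhdsLT hlt] with t ht
        exact (hgap t ht).2.symm
  obtain ⟨hz, hL⟩ := key M (by omega)
  rcases le_or_gt t (x M) with ht | ht
  · exact hz ht
  · have hright : IsFreeSolOn f f' (Ioi (x M)) := by simpa using h.isFreeSolOn_Ioi hx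
    exact (hright.eq_zero_of_tendsto_zero ordConnected_Ioi ht nhdsWithin_le_nhds
      self_mem_nhdsWithin h.1.continuousAt (hz self_mem_Iic)
      (h.tendsto_nhdsGT_zero_of_apply_eq_zero (by omega) (hz self_mem_Iic) hL)).1

theorem sum_mul_norm_sq_pos {lam : ℝ} (h : IsSol N x w v lam f f') (hN : 0 < N) {C : ℝ}
    (hC : ∀ t, ‖f t‖ ≤ C) (hne : ∃ t, f t ≠ 0) :
    0 < ∑ n ∈ Finset.range N, (lam * w n + lam ^ 2 * v n) * ‖f (x n)‖ ^ 2 := by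
  obtain ⟨M, rfl⟩ : ∃ M, N = M + 1 := ⟨N - 1, by omega⟩
  choose! L R hL hR hLR using h.2.2
  have hL0 : L 0 = f (x 0) / 2 := tendsto_nhds_unique (hL 0 hN) (h.tendsto_nhdsLT_x_zero hx hC)
  have hRM : R M = -f (x M) / 2 :=
    tendsto_nhds_unique (hR M (by omega)) (h.tendsto_nhdsGT_x_last hx hC)
  set G : ℕ → ℝ := fun n => (L n * conj (f (x n))).re
  set H : ℕ → ℝ := fun n => (R n * conj (f (x n))).re
  have hgap : ∀ m < M, H m ≤ G (m + 1) := fun m hm =>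
    (h.isFreeSolOn_Ioo hx (by omega)).re_mul_conj_le_of_tendsto
      (hx (mem_Iio.2 (by omega)) (mem_Iio.2 (by omega)) (by omega)) h.1 (hR m (by omega))
      (hL (m + 1) (by omega))
  have hx0 : f (x 0) ≠ 0 := fun h0 =>
    hne.elim fun t ht => ht (h.eq_zero_of_apply_x_zero_eq_zero hx hN hC h0 t)
  calc 0 < ‖f (x 0)‖ ^ 2 / 2 + ‖f (x M)‖ ^ 2 / 2 := by positivity
    _ = G 0 - H M := by
      simp only [G, H, hL0, hRM, div_mul_eq_mul_div, neg_mul, Complex.mul_conj']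
      norm_cast
      ring
    _ ≤ ∑ n ∈ Finset.range (M + 1), (G n - H n) := sub_le_sum_sub_of_le_succ hgap
    _ = _ := Finset.sum_congr rfl fun n hn => re_mul_conj_sub_re_mul_conj <| by
      push_cast
      exact hLR n (Finset.mem_range.1 hn)

end IsSol

theorem stmt_3_general (N : ℕ) (hN : 1 ≤ N) (x w v : ℕ → ℝ)
    (hx : ∀ i j, i < j → j < N → x i < x j)
    (hv : ∀ n, n < N → 0 ≤ v n)
    (lam : ℝ) (f f' : ℝ → ℂ)
    (hsol : IsSol N x w v (lam : ℂ) f f')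
    (hbd : ∃ C : ℝ, ∀ t : ℝ, ‖f t‖ ≤ C)
    (hne : ∃ t : ℝ, f t ≠ 0) :
    0 < lam * ((∑ n ∈ Finset.range N, w n * ‖f (x n)‖ ^ 2)
        + 2 * lam * ∑ n ∈ Finset.range N, v n * ‖f (x n)‖ ^ 2) := by
  obtain ⟨C, hC⟩ := hbd
  have hpos := hsol.sum_mul_norm_sq_pos (fun i _ j hj hij => hx i j hij hj) hN hC hne
  have hvsum : 0 ≤ lam ^ 2 * ∑ n ∈ Finset.range N, v n * ‖f (x n)‖ ^ 2 :=
    mul_nonneg (sq_nonneg lam) <| Finset.sum_nonneg fun n hn =>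
      mul_nonneg (hv n (Finset.mem_range.1 hn)) (sq_nonneg _)
  have hsplit : ∑ n ∈ Finset.range N, (lam * w n + lam ^ 2 * v n) * ‖f (x n)‖ ^ 2
      = lam * ∑ n ∈ Finset.range N, w n * ‖f (x n)‖ ^ 2
        + lam ^ 2 * ∑ n ∈ Finset.range N, v n * ‖f (x n)‖ ^ 2 := by
    simp only [add_mul, Finset.sum_add_distrib, Finset.mul_sum, mul_assoc]
  linear_combination hpos + hvsum + hsplit

/-- for a nontrivial bounded solution at a real `λ`, the norming constant
`Σ ω_n |f(x_n)|² + 2 λ Σ υ_n |f(x_n)|²` is nonzero and has the same sign as `λ`. -/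
theorem stmt_3 (N : ℕ) (hN : 1 ≤ N) (x w v : ℕ → ℝ)
    (hx : ∀ i j, i < j → j < N → x i < x j)
    (hv : ∀ n, n < N → 0 ≤ v n) (hnd : ∀ n, n < N → 0 < |w n| + v n)
    (lam : ℝ) (f f' : ℝ → ℂ)
    (hsol : IsSol N x w v (lam : ℂ) f f')
    (hbd : ∃ C : ℝ, ∀ t : ℝ, ‖f t‖ ≤ C)
    (hne : ∃ t : ℝ, f t ≠ 0) :
    0 < lam * ((∑ n ∈ Finset.range N, w n * ‖f (x n)‖ ^ 2)
        + 2 * lam * ∑ n ∈ Finset.range N, v n * ‖f (x n)‖ ^ 2) :=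
  stmt_3_general N hN x w v hx hv lam f f' hsol hbd hne
end

section
/- Let a < b be extended reals and let f : (a,b) → ℂ be twice differentiable with f″(x) = (1/4) f(x) and f(x) ≠ 0 for all x ∈ (a,b). Define Λ(x) = 2 sinh(x/2) cosh(x/2) − 4 (f′(x)/f(x)) cosh²(x/2). Then Λ is differentiable on (a,b) with Λ′(x) = Λ(x)² / (4 cosh²(x/2)) for all x ∈ (a,b). -/
/-!
The logarithmic derivative `m = f'/f` of a solution of `f'' = f/4` satisfies the Riccati equation
`m' = 1/4 - m²`. Writing `s = sinh (x/2)`, `c = cosh (x/2)`, we have `Λ = 2c (s - 2mc)`, and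
differentiating gives `Λ' = s² + c² - (1 - 4m²) c² - 4msc = (s - 2mc)² = Λ² / (4c²)`.
-/

open Complex

theorem HasDerivAt.logDeriv_riccati {𝕜 𝕜' : Type*} [NontriviallyNormedField 𝕜]
    [NontriviallyNormedField 𝕜'] [NormedAlgebra 𝕜 𝕜'] {f f' : 𝕜 → 𝕜'} {x : 𝕜}
    (k : 𝕜') (hf : HasDerivAt f (f' x) x) (hf' : HasDerivAt f' (k * f x) x) (hx : f x ≠ 0) :
    HasDerivAt (fun y => f' y / f y) (k - (f' x / f x) ^ 2) x := by
  convert hf'.fun_div hf hx using 1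
  field_simp

theorem Complex.cosh_ofReal_ne_zero (x : ℝ) : cosh (x : ℂ) ≠ 0 := by
  rw [← ofReal_cosh]
  exact_mod_cast (Real.cosh_pos x).ne'

theorem hasDerivAt_ofReal_div_two (x : ℝ) :
    HasDerivAt (fun y : ℝ => (y : ℂ) / 2) (1 / 2) x := by
  simpa using (hasDerivAt_id x).ofReal_comp.div_const 2

theorem hasDerivAt_sinh_half (x : ℝ) :
    HasDerivAt (fun y : ℝ => sinh ((y : ℂ) / 2)) (cosh ((x : ℂ) / 2) * (1 / 2)) x :=
  (hasDerivAt_sinh _).comp x (hasDerivAt_ofReal_div_two x)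

theorem hasDerivAt_cosh_half (x : ℝ) :
    HasDerivAt (fun y : ℝ => cosh ((y : ℂ) / 2)) (sinh ((x : ℂ) / 2) * (1 / 2)) x :=
  (hasDerivAt_cosh _).comp x (hasDerivAt_ofReal_div_two x)

theorem hasDerivAt_sinh_mul_cosh_sub_mul_cosh_sq {m : ℝ → ℂ} {x : ℝ}
    (hm : HasDerivAt m (1 / 4 - m x ^ 2) x) :
    HasDerivAt
      (fun y : ℝ => 2 * sinh ((y : ℂ) / 2) * cosh ((y : ℂ) / 2)
        - 4 * m y * cosh ((y : ℂ) / 2) ^ 2)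
      ((sinh ((x : ℂ) / 2) - 2 * m x * cosh ((x : ℂ) / 2)) ^ 2) x := by
  have hs := hasDerivAt_sinh_half x
  have hc := hasDerivAt_cosh_half x
  refine (((hs.const_mul 2).fun_mul hc).fun_sub
    ((hm.const_mul 4).fun_mul (hc.fun_pow 2))).congr_deriv ?_
  norm_num
  ring

theorem sq_sub_div_four_mul_sq {s c m : ℂ} (hc : c ≠ 0) :
    (2 * s * c - 4 * m * c ^ 2) ^ 2 / (4 * c ^ 2) = (s - 2 * m * c) ^ 2 := by
  field_simp
  ring

theorem stmt_8_general (a b : EReal) (f f' : ℝ → ℂ)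
    (hf : ∀ x : ℝ, a < (x : EReal) → (x : EReal) < b → HasDerivAt f (f' x) x)
    (hf' : ∀ x : ℝ, a < (x : EReal) → (x : EReal) < b →
      HasDerivAt f' ((1 / 4) * f x) x)
    (hnz : ∀ x : ℝ, a < (x : EReal) → (x : EReal) < b → f x ≠ 0) :
    ∀ x : ℝ, a < (x : EReal) → (x : EReal) < b →
      HasDerivAt
        (fun y : ℝ => 2 * Complex.sinh ((y : ℂ) / 2) * Complex.cosh ((y : ℂ) / 2)
          - 4 * (f' y / f y) * Complex.cosh ((y : ℂ) / 2) ^ 2)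
        ((2 * Complex.sinh ((x : ℂ) / 2) * Complex.cosh ((x : ℂ) / 2)
          - 4 * (f' x / f x) * Complex.cosh ((x : ℂ) / 2) ^ 2) ^ 2
          / (4 * Complex.cosh ((x : ℂ) / 2) ^ 2)) x := by
  intro x hax hxb
  have hcosh : cosh ((x : ℂ) / 2) ≠ 0 := by
    simpa using cosh_ofReal_ne_zero (x / 2)
  rw [sq_sub_div_four_mul_sq hcosh]
  exact hasDerivAt_sinh_mul_cosh_sub_mul_cosh_sq
    ((hf x hax hxb).logDeriv_riccati _ (hf' x hax hxb) (hnz x hax hxb))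

/-- the Riccati-type equation for
`Λ(x) = 2 sinh(x/2) cosh(x/2) - 4 (f'(x)/f(x)) cosh²(x/2)` where `-f'' + (1/4) f = 0`
and `f ≠ 0` on the (extended-real) open interval `(a, b)`:
`Λ' = Λ² / (4 cosh²(x/2))` there. -/
theorem stmt_8 (a b : EReal) (hab : a < b) (f f' : ℝ → ℂ)
    (hf : ∀ x : ℝ, a < (x : EReal) → (x : EReal) < b → HasDerivAt f (f' x) x)
    (hf' : ∀ x : ℝ, a < (x : EReal) → (x : EReal) < b →
      HasDerivAt f' ((1 / 4) * f x) x)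
    (hnz : ∀ x : ℝ, a < (x : EReal) → (x : EReal) < b → f x ≠ 0) :
    ∀ x : ℝ, a < (x : EReal) → (x : EReal) < b →
      HasDerivAt
        (fun y : ℝ => 2 * Complex.sinh ((y : ℂ) / 2) * Complex.cosh ((y : ℂ) / 2)
          - 4 * (f' y / f y) * Complex.cosh ((y : ℂ) / 2) ^ 2)
        ((2 * Complex.sinh ((x : ℂ) / 2) * Complex.cosh ((x : ℂ) / 2)
          - 4 * (f' x / f x) * Complex.cosh ((x : ℂ) / 2) ^ 2) ^ 2
          / (4 * Complex.cosh ((x : ℂ) / 2) ^ 2)) x :=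
  stmt_8_general a b f f' hf hf' hnz
end

section
/- Let (s_k)_{k ≥ −1} be a sequence in a commutative ring, and for j ∈ {−1, 0, 1} and k ≥ 0 let Δ_{j,k} = det( (s_{i+i′+j})_{i,i′=0}^{k−1} ) denote the k×k Hankel determinant (with Δ_{j,0} = 1). Then for every k ≥ 0 one has Δ_{1,k+1} · Δ_{−1,k+1} − Δ_{1,k} · Δ_{−1,k+2} = (Δ_{0,k+1})². -/
/-!
Write `C` for the identity matrix with rows `i, j` replaced by rows `i, j` of `adjugate M`. Then
`det C` is the `2 × 2` minor of `adjugate M` on `{i, j}`, while `C * M` is `M` with rows `i, j`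
replaced by `det M • eᵢ, det M • eⱼ`, whose determinant is `det M ^ 2` times the complementary
minor of `M`. This is the Desnanot–Jacobi identity multiplied by `det M`, and the factor cancels
for the generic matrix over `ℤ[Xᵢⱼ]`. For a Hankel matrix `(s_{i+i'-1})` of size `k + 2`, deleting
the first and/or last row and column produces again Hankel matrices, with shifts `1, -1, 0, 0`
and, for the inner block, `1`.
-/

/-- The `k × k` Hankel determinant `Δ_{j,k} = det (s_{i+i'+j})_{i,i'=0}^{k-1}` of a
two-sided sequence `s`. -/
def hankelDet {R : Type*} [CommRing R] (s : ℤ → R) (j : ℤ) (k : ℕ) : R :=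
  Matrix.det (Matrix.of fun i i' : Fin k => s (((i : ℕ) : ℤ) + ((i' : ℕ) : ℤ) + j))

namespace Matrix

variable {n R : Type*} [Fintype n] [DecidableEq n] [CommRing R]

theorem det_updateRow_eq_sum (A : Matrix n n R) (i : n) (v : n → R) :
    (A.updateRow i v).det = ∑ k, v k * (A.updateRow i (Pi.single k 1)).det := by
  conv_lhs => rw [pi_eq_sum_univ' v]
  simp_rw [← cramer_transpose_apply, map_sum, map_smul, Finset.sum_apply, Pi.smul_apply,
    smul_eq_mul]

theorem det_updateRow_eq_zero_of_eq {A : Matrix n n R} {i k : n} {v : n → R} (hki : k ≠ i)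
    (hk : A k = v) : (A.updateRow i v).det = 0 := by
  rw [← hk]
  exact det_updateRow_eq_zero hki

theorem det_one_updateRow (i : n) (v : n → R) :
    ((1 : Matrix n n R).updateRow i v).det = v i := by
  rw [← cramer_transpose_apply, transpose_one, cramer_one]
  rfl

theorem det_one_updateRow_single_updateRow_single {i j : n} (hij : i ≠ j) :
    (((1 : Matrix n n R).updateRow i (Pi.single j 1)).updateRow j (Pi.single i 1)).det = -1 := by
  have : ((1 : Matrix n n R).updateRow i (Pi.single j 1)).updateRow j (Pi.single i 1)
      = (1 : Matrix n n R).submatrix (Equiv.swap i j) id := by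
    ext r c
    rcases eq_or_ne r j with rfl | hrj
    · simp [Pi.single_apply, one_apply, eq_comm]
    rcases eq_or_ne r i with rfl | hri
    · simp [Pi.single_apply, one_apply, hrj, eq_comm]
    · rw [updateRow_ne hrj, updateRow_ne hri, submatrix_apply,
        Equiv.swap_apply_of_ne_of_ne hri hrj, id]
  rw [this, det_permute, Equiv.Perm.sign_swap hij, det_one]
  simp

theorem det_one_updateRow_updateRow {i j : n} (hij : i ≠ j) (a b : n → R) :
    (((1 : Matrix n n R).updateRow i a).updateRow j b).det = a i * b j - a j * b i := by
  have one_row : ∀ k, (1 : Matrix n n R) k = Pi.single k 1 :=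
    fun _ => funext fun _ => one_eq_pi_single
  have hA : ∀ k, k ≠ i → ((1 : Matrix n n R).updateRow i a) k = Pi.single k 1 := fun k hk => by
    rw [updateRow_ne hk, one_row]
  have h_j : (((1 : Matrix n n R).updateRow i a).updateRow j (Pi.single j 1)).det = a i := by
    rw [← hA j hij.symm, updateRow_eq_self, det_one_updateRow]
  have h_i : (((1 : Matrix n n R).updateRow i a).updateRow j (Pi.single i 1)).det = -a j := by
    rw [updateRow_comm _ hij, det_updateRow_eq_sum, Fintype.sum_eq_single j,
      det_one_updateRow_single_updateRow_single hij.symm, mul_neg_one]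
    intro p hpj
    rcases eq_or_ne p i with rfl | hpi
    · rw [det_updateRow_eq_zero_of_eq hij.symm updateRow_self, mul_zero]
    · rw [det_updateRow_eq_zero_of_eq hpi (by rw [updateRow_ne hpj, one_row]), mul_zero]
  -- Expanding row `j`, only `eᵢ` and `eⱼ` contribute: every other `e_q` repeats row `q`.
  rw [det_updateRow_eq_sum, Fintype.sum_eq_add i j hij, h_i, h_j]
  · ring
  · rintro q ⟨hqi, hqj⟩
    rw [det_updateRow_eq_zero_of_eq hqj (hA q hqi), mul_zero]

theorem det_mul_desnanot_jacobi (M : Matrix n n R) {i j : n} (hij : i ≠ j) :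
    M.det * (adjugate M i i * adjugate M j j - adjugate M i j * adjugate M j i)
      = M.det ^ 2 * ((M.updateRow i (Pi.single i 1)).updateRow j (Pi.single j 1)).det := by
  have hrow : ∀ k, adjugate M k ᵥ* M = M.det • Pi.single k 1 := fun k => by
    rw [← mul_apply_eq_vecMul, adjugate_mul]
    ext; simp [one_eq_pi_single]
  calc M.det * (adjugate M i i * adjugate M j j - adjugate M i j * adjugate M j i)
      = (((1 : Matrix n n R).updateRow i (adjugate M i)).updateRow j (adjugate M j) * M).det := by
        rw [det_mul, det_one_updateRow_updateRow hij, mul_comm]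
    _ = ((M.updateRow i (M.det • Pi.single i 1)).updateRow j (M.det • Pi.single j 1)).det := by
        rw [updateRow_mul, updateRow_mul, one_mul, hrow, hrow]
    _ = _ := by
        rw [det_updateRow_smul, updateRow_comm _ hij, det_updateRow_smul, updateRow_comm _ hij.symm]
        ring

theorem desnanot_jacobi (M : Matrix n n R) {i j : n} (hij : i ≠ j) :
    adjugate M i i * adjugate M j j - adjugate M i j * adjugate M j i
      = M.det * ((M.updateRow i (Pi.single i 1)).updateRow j (Pi.single j 1)).det := by
  -- The identity times `det` holds over any ring; cancel `det` for the generic matrix, where it is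
  -- not a zero divisor, and specialize.
  let f := MvPolynomial.aeval (R := ℤ) fun p : n × n => M p.1 p.2
  have hf : ∀ k, f ∘ (Pi.single k 1 : n → MvPolynomial (n × n) ℤ) = Pi.single k 1 := fun k => by
    ext; simp [Pi.single_apply, apply_ite f]
  have hX := mvPolynomialX_mapMatrix_aeval ℤ M
  have generic : adjugate (mvPolynomialX n n ℤ) i i * adjugate (mvPolynomialX n n ℤ) j j
      - adjugate (mvPolynomialX n n ℤ) i j * adjugate (mvPolynomialX n n ℤ) j i
      = (mvPolynomialX n n ℤ).det * (((mvPolynomialX n n ℤ).updateRow i (Pi.single i 1)).updateRow j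
          (Pi.single j 1)).det :=
    mul_left_cancel₀ (det_mvPolynomialX_ne_zero n ℤ) (by rw [det_mul_desnanot_jacobi _ hij]; ring)
  have hadj : ∀ a b, f (adjugate (mvPolynomialX n n ℤ) a b) = adjugate M a b := fun a b => by
    rw [← hX, ← AlgHom.map_adjugate]
    rfl
  have hE : f.mapMatrix (((mvPolynomialX n n ℤ).updateRow i (Pi.single i 1)).updateRow j
      (Pi.single j 1)) = (M.updateRow i (Pi.single i 1)).updateRow j (Pi.single j 1) := by
    rw [← hX]
    simp only [AlgHom.mapMatrix_apply, map_updateRow, hf]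
    rfl
  have := congrArg f generic
  rwa [map_sub, map_mul, map_mul, map_mul, hadj, hadj, hadj, hadj, AlgHom.map_det, AlgHom.map_det,
    hX, hE] at this

theorem det_updateRow_single_eq_det_submatrix {m : ℕ} (A : Matrix (Fin (m + 1)) (Fin (m + 1)) R)
    (i : Fin (m + 1)) :
    (A.updateRow i (Pi.single i 1)).det = (A.submatrix i.succAbove i.succAbove).det := by
  rw [← adjugate_apply, adjugate_fin_succ_eq_det_submatrix, (Even.add_self (i : ℕ)).neg_one_pow,
    one_mul]

theorem desnanot_jacobi_fin {m : ℕ} (M : Matrix (Fin (m + 2)) (Fin (m + 2)) R) :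
    (M.submatrix Fin.succ Fin.succ).det * (M.submatrix Fin.castSucc Fin.castSucc).det
      - (M.submatrix Fin.succ Fin.castSucc).det * (M.submatrix Fin.castSucc Fin.succ).det
      = M.det * (M.submatrix (fun i : Fin m => i.succ.castSucc) (fun i => i.succ.castSucc)).det := by
  have h := desnanot_jacobi M (Fin.last_pos.ne : (0 : Fin (m + 2)) ≠ Fin.last (m + 1))
  have hinner : (M.updateRow 0 (Pi.single 0 1)).submatrix Fin.castSucc Fin.castSucc
      = (M.submatrix Fin.castSucc Fin.castSucc).updateRow 0 (Pi.single 0 1) := by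
    ext r c
    rcases eq_or_ne r 0 with rfl | hr
    · simp [Pi.single_apply]
    · simp [updateRow_apply, hr]
  simp only [adjugate_fin_succ_eq_det_submatrix, det_updateRow_single_eq_det_submatrix,
    Fin.succAbove_zero, Fin.succAbove_last, hinner, submatrix_submatrix, Function.comp_def,
    Fin.val_zero, Fin.val_last, add_zero, zero_add, pow_zero, one_mul,
    (Even.add_self (m + 1)).neg_one_pow] at h
  have hsign : (-1 : R) ^ (m + 1) * (-1) ^ (m + 1) = 1 := by
    rw [← pow_add, (Even.add_self (m + 1)).neg_one_pow]
  linear_combination h + (M.submatrix Fin.succ Fin.castSucc).det *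
    (M.submatrix Fin.castSucc Fin.succ).det * hsign

end Matrix

def hankelMatrix {R : Type*} (s : ℤ → R) (j : ℤ) (k : ℕ) : Matrix (Fin k) (Fin k) R :=
  Matrix.of fun i i' => s ((i : ℕ) + (i' : ℕ) + j)

theorem hankelDet_eq_det {R : Type*} [CommRing R] (s : ℤ → R) (j : ℤ) (k : ℕ) :
    hankelDet s j k = (hankelMatrix s j k).det := rfl

theorem hankelMatrix_submatrix {R : Type*} (s : ℤ → R) {j j' : ℤ} {k m : ℕ} {f g : Fin k → Fin m}
    {a b : ℤ} (hf : ∀ i, ((f i : ℕ) : ℤ) = i + a) (hg : ∀ i, ((g i : ℕ) : ℤ) = i + b)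
    (hj : j' = j + a + b) : (hankelMatrix s j m).submatrix f g = hankelMatrix s j' k := by
  ext i i'
  simp only [hankelMatrix, Matrix.submatrix_apply, Matrix.of_apply, hf, hg, hj]
  ring_nf

/-- the Hankel determinant identity
`Δ_{1,k+1} Δ_{-1,k+1} - Δ_{1,k} Δ_{-1,k+2} = (Δ_{0,k+1})²`
(a consequence of Sylvester's determinant identity). -/
theorem stmt_15 {R : Type*} [CommRing R] (s : ℤ → R) (k : ℕ) :
    hankelDet s 1 (k + 1) * hankelDet s (-1) (k + 1)
      - hankelDet s 1 k * hankelDet s (-1) (k + 2)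
      = (hankelDet s 0 (k + 1)) ^ 2 := by
  have h := Matrix.desnanot_jacobi_fin (hankelMatrix s (-1) (k + 2))
  rw [hankelMatrix_submatrix s (j' := 1) (a := 1) (b := 1) (by simp) (by simp) (by norm_num),
    hankelMatrix_submatrix s (j' := -1) (a := 0) (b := 0) (by simp) (by simp) (by norm_num),
    hankelMatrix_submatrix s (j' := 0) (a := 1) (b := 0) (by simp) (by simp) (by norm_num),
    hankelMatrix_submatrix s (j' := 0) (a := 0) (b := 1) (by simp) (by simp) (by norm_num),
    hankelMatrix_submatrix s (j' := 1) (a := 1) (b := 1) (by simp) (by simp) (by norm_num)] at h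
  simp only [hankelDet_eq_det]
  linear_combination h
end
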